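/- arXiv:1203.4454 — 12 statements merged into one kernel-verified Lean document; each statement's English description precedes it below -/
import Mathlib

section
/- Let a ∈ (0, 1/2], α = (a, 1−a), and x, y ≥ 0. Then (1/(1−a))·Var_α(X^{1/2}) ≤ a·x + (1−a)·y − x^a·y^{1−a} ≤ (1/a)·Var_α(X^{1/2}), where X = (x,y). -/
private lemma km_lower (a x y : ℝ) (ha0 : 0 < a) (ha2 : a ≤ 1/2) (hx : 0 < x) (hy : 0 < y) :
    a * (Real.sqrt x - Real.sqrt y) ^ 2 ≤ a * x + (1 - a) * y - x ^ a * y ^ (1 - a) := by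
  have hsx : Real.sqrt x ^ 2 = x := Real.sq_sqrt hx.le
  have hsy : Real.sqrt y ^ 2 = y := Real.sq_sqrt hy.le
  have key := Real.geom_mean_le_arith_mean2_weighted (w₁ := 1 - 2*a) (w₂ := 2*a)
    (p₁ := y) (p₂ := Real.sqrt x * Real.sqrt y)
    (by linarith) (by linarith) hy.le (by positivity) (by ring)
  have h1 : (Real.sqrt x * Real.sqrt y) ^ (2*a) = x ^ a * y ^ a := by
    rw [Real.mul_rpow (Real.sqrt_nonneg x) (Real.sqrt_nonneg y),
      Real.sqrt_eq_rpow, Real.sqrt_eq_rpow, ← Real.rpow_mul hx.le, ← Real.rpow_mul hy.le]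
    ring_nf
  have h2 : y ^ (1 - 2*a) * (x ^ a * y ^ a) = x ^ a * y ^ (1 - a) := by
    rw [mul_comm, mul_assoc, ← Real.rpow_add hy]
    ring_nf
  rw [h1, h2] at key
  nlinarith [key, hsx, hsy]

private lemma km_upper (a x y : ℝ) (ha0 : 0 < a) (ha2 : a ≤ 1/2) (hx : 0 < x) (hy : 0 < y) :
    a * x + (1 - a) * y - x ^ a * y ^ (1 - a) ≤ (1 - a) * (Real.sqrt x - Real.sqrt y) ^ 2 := by
  have hsx : Real.sqrt x ^ 2 = x := Real.sq_sqrt hx.le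
  have hsy : Real.sqrt y ^ 2 = y := Real.sq_sqrt hy.le
  have ha1 : 0 < 1 - a := by linarith
  have ha2' : 0 ≤ 1 - 2*a := by linarith
  have key := Real.geom_mean_le_arith_mean2_weighted
    (w₁ := 1 / (2*(1-a))) (w₂ := (1 - 2*a) / (2*(1-a)))
    (p₁ := x ^ a * y ^ (1-a)) (p₂ := x)
    (by positivity) (by positivity) (by positivity) hx.le (by field_simp; ring)
  have h1 : (x ^ a * y ^ (1-a)) ^ (1 / (2*(1-a))) * x ^ ((1 - 2*a) / (2*(1-a)))
      = Real.sqrt x * Real.sqrt y := by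
    rw [Real.mul_rpow (by positivity) (by positivity), ← Real.rpow_mul hx.le,
      ← Real.rpow_mul hy.le, mul_right_comm, ← Real.rpow_add hx]
    have e1 : a * (1 / (2*(1-a))) + (1 - 2*a) / (2*(1-a)) = 1/2 := by field_simp; ring
    have e2 : (1 - a) * (1 / (2*(1-a))) = 1/2 := by field_simp
    rw [e1, e2, Real.sqrt_eq_rpow, Real.sqrt_eq_rpow]
  rw [h1] at key
  have key2 := mul_le_mul_of_nonneg_left key (by positivity : (0:ℝ) ≤ 2*(1-a))
  have h3 : 2*(1-a) * (1 / (2*(1-a)) * (x ^ a * y ^ (1-a)) + (1 - 2*a) / (2*(1-a)) * x)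
      = x ^ a * y ^ (1-a) + (1 - 2*a) * x := by field_simp
  rw [h3] at key2
  nlinarith [key2, hsx, hsy]

theorem two_point_variance_bounds (a x y : ℝ) (ha : a ∈ Set.Ioc (0 : ℝ) (1/2))
    (hx : 0 ≤ x) (hy : 0 ≤ y) :
    (1 / (1 - a)) * (a * x + (1 - a) * y - (a * Real.sqrt x + (1 - a) * Real.sqrt y) ^ 2) ≤
      a * x + (1 - a) * y - x ^ a * y ^ (1 - a) ∧
    a * x + (1 - a) * y - x ^ a * y ^ (1 - a) ≤
      (1 / a) * (a * x + (1 - a) * y - (a * Real.sqrt x + (1 - a) * Real.sqrt y) ^ 2) := by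
  obtain ⟨ha0, ha2⟩ := ha
  have ha1 : 0 < 1 - a := by linarith
  have hsx : Real.sqrt x ^ 2 = x := Real.sq_sqrt hx
  have hsy : Real.sqrt y ^ 2 = y := Real.sq_sqrt hy
  have hL : (1 / (1 - a)) * (a * x + (1 - a) * y
      - (a * Real.sqrt x + (1 - a) * Real.sqrt y) ^ 2)
      = a * (Real.sqrt x - Real.sqrt y) ^ 2 := by
    field_simp
    nlinarith [hsx, hsy]
  have hU : (1 / a) * (a * x + (1 - a) * y
      - (a * Real.sqrt x + (1 - a) * Real.sqrt y) ^ 2)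
      = (1 - a) * (Real.sqrt x - Real.sqrt y) ^ 2 := by
    field_simp
    nlinarith [hsx, hsy]
  rw [hL, hU]
  -- handle boundary cases
  rcases eq_or_lt_of_le hx with hx0 | hxp
  · subst x
    rw [Real.zero_rpow (ne_of_gt ha0)] at *
    simp only [Real.sqrt_zero, zero_mul, zero_sub, neg_sq, mul_zero, zero_add, sub_zero]
    constructor <;> nlinarith [hsy, hy]
  rcases eq_or_lt_of_le hy with hy0 | hyp
  · subst y
    rw [Real.zero_rpow (by intro h; linarith : (1 - a) ≠ 0)]
    simp only [Real.sqrt_zero, mul_zero, add_zero, sub_zero, sub_zero]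
    constructor <;> nlinarith [hsx, hx]
  exact ⟨km_lower a x y ha0 ha2 hxp hyp, km_upper a x y ha0 ha2 hxp hyp⟩
end

section
/- Let n ≥ 2, X = (x₁,…,xₙ) with xᵢ ≥ 0 and x_j = 0 for some index j, and let α = (α₁,…,αₙ) with αᵢ > 0 and Σ αᵢ = 1. Then (1/(1−α_min))·Var_α(X^{1/2}) ≤ Σ αᵢ xᵢ ≤ (1/α_min)·Var_α(X^{1/2}). -/
theorem variance_bounds_zero_coordinate (n : ℕ) (hn : 2 ≤ n)
    (x α : Fin n → ℝ) (hx : ∀ i, 0 ≤ x i) (hzero : ∃ j, x j = 0)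
    (hα : ∀ i, 0 < α i) (hsum : ∑ i, α i = 1) :
    (1 / (1 - ⨅ i, α i)) * (∑ i, α i * x i - (∑ i, α i * Real.sqrt (x i)) ^ 2) ≤
      ∑ i, α i * x i ∧
    ∑ i, α i * x i ≤
      (1 / ⨅ i, α i) * (∑ i, α i * x i - (∑ i, α i * Real.sqrt (x i)) ^ 2) := by
  obtain ⟨j, hj⟩ := hzero
  have hnemp : Nonempty (Fin n) := ⟨j⟩
  have hbd : BddBelow (Set.range α) := (Set.finite_range α).bddBelow
  set m := ⨅ i, α i with hmdef
  have hm_le : ∀ i, m ≤ α i := fun i => ciInf_le hbd i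
  obtain ⟨i0, hi0⟩ : ∃ i0, ∀ i, α i0 ≤ α i := Finite.exists_min α
  have hmeq : m = α i0 := le_antisymm (hm_le i0) (le_ciInf hi0)
  have hm_pos : 0 < m := hmeq ▸ hα i0
  -- m < 1
  have hne : Nontrivial (Fin n) := Fin.nontrivial_iff_two_le.mpr hn
  obtain ⟨i1, hi1⟩ := exists_ne i0
  have hpair : α i0 + α i1 ≤ 1 := by
    rw [← hsum]
    have : ({i0, i1} : Finset (Fin n)) ⊆ Finset.univ := Finset.subset_univ _
    calc α i0 + α i1 = ∑ i ∈ ({i0, i1} : Finset (Fin n)), α i := by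
          rw [Finset.sum_pair (Ne.symm hi1)]
      _ ≤ ∑ i, α i := Finset.sum_le_sum_of_subset_of_nonneg this
          (fun i _ _ => (hα i).le)
  have hm_lt_one : m < 1 := by
    have := hα i1
    rw [hmeq]; linarith
  set S := ∑ i, α i * x i with hS
  set M := ∑ i, α i * Real.sqrt (x i) with hM
  have hS_nonneg : 0 ≤ S :=
    Finset.sum_nonneg fun i _ => mul_nonneg (hα i).le (hx i)
  -- lower key : m * S ≤ M ^ 2
  have key1 : m * S ≤ M ^ 2 := by
    have h1 : ∑ i, (α i * Real.sqrt (x i)) ^ 2 ≤ M ^ 2 :=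
      Finset.sum_sq_le_sq_sum_of_nonneg fun i _ =>
        mul_nonneg (hα i).le (Real.sqrt_nonneg _)
    have h2 : m * S ≤ ∑ i, (α i * Real.sqrt (x i)) ^ 2 := by
      rw [hS, Finset.mul_sum]
      refine Finset.sum_le_sum fun i _ => ?_
      have : (α i * Real.sqrt (x i)) ^ 2 = α i * α i * x i := by
        rw [mul_pow, Real.sq_sqrt (hx i)]; ring
      rw [this]
      have := hm_le i
      nlinarith [hx i, hα i, hm_pos]
    linarith
  -- upper key : M ^ 2 ≤ (1 - m) * S
  have key2 : M ^ 2 ≤ (1 - m) * S := by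
    have hMs : M = ∑ i ∈ Finset.univ.erase j, α i * Real.sqrt (x i) :=
      (Finset.sum_erase _ (by simp [hj])).symm
    have hSs : S = ∑ i ∈ Finset.univ.erase j, α i * x i :=
      (Finset.sum_erase _ (by simp [hj])).symm
    have hαs : ∑ i ∈ Finset.univ.erase j, α i = 1 - α j := by
      have := Finset.sum_erase_add Finset.univ α (Finset.mem_univ j)
      linarith [this.symm ▸ hsum]
    have cs : (∑ i ∈ Finset.univ.erase j, Real.sqrt (α i) *
        (Real.sqrt (α i) * Real.sqrt (x i))) ^ 2 ≤
        (∑ i ∈ Finset.univ.erase j, Real.sqrt (α i) ^ 2) *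
        ∑ i ∈ Finset.univ.erase j, (Real.sqrt (α i) * Real.sqrt (x i)) ^ 2 :=
      Finset.sum_mul_sq_le_sq_mul_sq _ _ _
    have e1 : ∀ i, Real.sqrt (α i) * (Real.sqrt (α i) * Real.sqrt (x i)) =
        α i * Real.sqrt (x i) := by
      intro i
      rw [← mul_assoc, Real.mul_self_sqrt (hα i).le]
    have e2 : ∀ i, Real.sqrt (α i) ^ 2 = α i := fun i => Real.sq_sqrt (hα i).le
    have e3 : ∀ i, (Real.sqrt (α i) * Real.sqrt (x i)) ^ 2 = α i * x i := by
      intro i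
      rw [mul_pow, Real.sq_sqrt (hα i).le, Real.sq_sqrt (hx i)]
    simp only [e1, e2, e3] at cs
    rw [← hMs, ← hSs, hαs] at cs
    have hmj : m ≤ α j := hm_le j
    nlinarith [hS_nonneg]
  constructor
  · rw [div_mul_eq_mul_div, one_mul, div_le_iff₀ (by linarith)]
    nlinarith
  · rw [div_mul_eq_mul_div, one_mul, le_div_iff₀ hm_pos]
    nlinarith
end

section
/- Let n ≥ 2, X = (x₁,…,xₙ) with xᵢ ≥ 0, and α = (α₁,…,αₙ) with αᵢ > 0 and Σ αᵢ = 1. Then Σ αᵢ xᵢ − Π xᵢ^{αᵢ} ≤ (1/α_min)·Var_α(X^{1/2}). -/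
/-! Writing `x = y ^ 2`, `A = ∑ αᵢ yᵢ²`, `W = ∑ αᵢ yᵢ`, `G = ∏ (yᵢ²)^αᵢ` and `m = α_min`, the
claim is `W² ≤ (1 - m) A + m G`. Merging the two points with the largest values `y` into one point
that carries their total weight and sits at their weighted mean leaves `W` unchanged and does not
increase `(1 - m) A + m G`: the two-point case of the inequality (Bernoulli's inequality
`t ^ (2q) ≥ 1 + 2q (t - 1)` for `2q ≥ 1`) controls the drop of `A` against the rise of `G`, and
the other factors of `G` are at most the merged value. After all merges a single point is left,
for which both sides are equal. -/

open Finset Real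

lemma two_mul_mul_sub_le_sq_rpow_mul_sq_rpow {p q a b : ℝ} (hp : 0 < p) (hpq : p + q = 1)
    (hle : p ≤ q) (ha : 0 ≤ a) (hb : 0 ≤ b) :
    2 * q * a * b - (q - p) * a ^ 2 ≤ (a ^ 2) ^ p * (b ^ 2) ^ q := by
  rcases ha.eq_or_lt with rfl | ha
  · simp [zero_rpow hp.ne']
  set t := b / a
  have ht : 0 ≤ t := div_nonneg hb ha.le
  have hbt : b = a * t := (mul_div_cancel₀ b ha.ne').symm
  have hbern : 1 + 2 * q * (t - 1) ≤ (t ^ 2) ^ q := by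
    have := one_add_mul_self_le_rpow_one_add (by linarith : (-1 : ℝ) ≤ t - 1)
      (by linarith : (1 : ℝ) ≤ 2 * q)
    rwa [add_sub_cancel, rpow_mul ht, rpow_two] at this
  have hprod : (a ^ 2) ^ p * (b ^ 2) ^ q = a ^ 2 * (t ^ 2) ^ q := by
    rw [hbt, mul_pow, mul_rpow (by positivity) (by positivity), ← mul_assoc,
      ← rpow_add (by positivity), hpq, rpow_one]
  rw [hprod, hbt, show p = 1 - q by linarith]
  nlinarith [mul_le_mul_of_nonneg_left hbern (sq_nonneg a)]

lemma min_mul_sub_le_two_point {p q a b : ℝ} (hp : 0 < p) (hq : 0 < q) (hpq : p + q = 1)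
    (ha : 0 ≤ a) (hb : 0 ≤ b) :
    min p q * (p * a ^ 2 + q * b ^ 2 - (a ^ 2) ^ p * (b ^ 2) ^ q) ≤
      p * a ^ 2 + q * b ^ 2 - (p * a + q * b) ^ 2 := by
  rcases le_total p q with hle | hle
  · have key := two_mul_mul_sub_le_sq_rpow_mul_sq_rpow hp hpq hle ha hb
    obtain rfl : q = 1 - p := by linarith
    rw [min_eq_left hle]
    nlinarith [mul_le_mul_of_nonneg_left key hp.le]
  · have key := two_mul_mul_sub_le_sq_rpow_mul_sq_rpow hq (by linarith) hle hb ha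
    obtain rfl : p = 1 - q := by linarith
    rw [min_eq_right hle]
    nlinarith [mul_le_mul_of_nonneg_left key hq.le]

lemma mul_rpow_sub_rpow_le_sub {g v β R : ℝ} (hg : 0 ≤ g) (hgv : g ≤ v) (hβ₀ : 0 ≤ β)
    (hβ₁ : β ≤ 1) (hR : R ≤ v ^ (1 - β)) : R * (v ^ β - g ^ β) ≤ v - g := by
  have split : ∀ x : ℝ, 0 ≤ x → x ^ β * x ^ (1 - β) = x := fun x hx => by
    rw [← rpow_add' hx (by rw [add_sub_cancel]; exact one_ne_zero), add_sub_cancel, rpow_one]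
  calc R * (v ^ β - g ^ β) ≤ v ^ (1 - β) * (v ^ β - g ^ β) :=
        mul_le_mul_of_nonneg_right hR (sub_nonneg.2 (rpow_le_rpow hg hgv hβ₀))
    _ = v - g ^ β * v ^ (1 - β) := by rw [mul_sub, mul_comm, split v (hg.trans hgv), mul_comm]
    _ ≤ v - g ^ β * g ^ (1 - β) := by gcongr
    _ = v - g := by rw [split g hg]

lemma interpolant_merge_le {m p q a b s R : ℝ} (hm : 0 < m) (hmp : m ≤ p) (hmq : m ≤ q)
    (hpq : p + q ≤ 1) (ha : 0 ≤ a) (hb : 0 ≤ b) (hs : (p + q) * s = p * a + q * b)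
    (hR : R ≤ (s ^ 2) ^ (1 - (p + q))) :
    (1 - m) * ((p + q) * s ^ 2) + m * ((s ^ 2) ^ (p + q) * R) ≤
      (1 - m) * (p * a ^ 2 + q * b ^ 2) + m * ((a ^ 2) ^ p * (b ^ 2) ^ q * R) := by
  set β := p + q
  have hp : 0 < p := hm.trans_le hmp
  have hq : 0 < q := hm.trans_le hmq
  have hβ : 0 < β := add_pos hp hq
  set p' := p / β
  set q' := q / β
  have hp' : 0 < p' := div_pos hp hβ
  have hq' : 0 < q' := div_pos hq hβ
  have hp'q' : p' + q' = 1 := by rw [← add_div, div_self hβ.ne']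
  have hs' : s = p' * a + q' * b := by
    rw [div_mul_eq_mul_div, div_mul_eq_mul_div, ← add_div, ← hs,
      mul_div_cancel_left₀ _ hβ.ne']
  set A := p' * a ^ 2 + q' * b ^ 2 with hA_def
  set g := (a ^ 2) ^ p' * (b ^ 2) ^ q' with hg_def
  have hA : p * a ^ 2 + q * b ^ 2 = β * A := by simp only [A, p', q']; field_simp
  have hgβ : (a ^ 2) ^ p * (b ^ 2) ^ q = g ^ β := by
    rw [mul_rpow (by positivity) (by positivity), ← rpow_mul (by positivity),
      ← rpow_mul (by positivity), div_mul_cancel₀ _ hβ.ne', div_mul_cancel₀ _ hβ.ne']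
  have hgap := min_mul_sub_le_two_point hp' hq' hp'q' ha hb
  rw [← hs'] at hgap
  have hvar : 0 ≤ A - s ^ 2 := by
    have : A - s ^ 2 = p' * q' * (a - b) ^ 2 := by
      rw [hA_def, hs', show q' = 1 - p' by linarith]
      ring
    rw [this]
    positivity
  have hgs : g ≤ s ^ 2 := by
    have := geom_mean_le_arith_mean2_weighted hp'.le hq'.le ha hb hp'q'
    rw [hg_def, hs', ← rpow_pow_comm ha, ← rpow_pow_comm hb, ← mul_pow]
    exact pow_le_pow_left₀ (by positivity) this 2
  have hinterp := mul_rpow_sub_rpow_le_sub (by positivity) hgs hβ.le hpq hR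
  have hmin : m ≤ β * min p' q' := by
    rw [mul_min_of_nonneg _ _ hβ.le]
    simp only [p', q', mul_div_cancel₀ _ hβ.ne']
    exact le_min hmp hmq
  have hmin' : 0 < min p' q' := lt_min hp' hq'
  have hmix : m * (s ^ 2 - g) ≤ (1 - m) * β * (A - s ^ 2) := by
    have : min p' q' * (m * (s ^ 2 - g)) ≤ min p' q' * ((1 - m) * β * (A - s ^ 2)) := by
      nlinarith [mul_le_mul_of_nonneg_left hgap hm.le, mul_nonneg (sub_nonneg.2 hmin) hvar,
        mul_nonneg (mul_nonneg (mul_nonneg hm.le hmin'.le) (sub_nonneg.2 hpq)) hvar]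
    exact le_of_mul_le_mul_left this hmin'
  rw [hgβ, hA]
  linarith [mul_le_mul_of_nonneg_left hinterp hm.le]

section Weighted

variable {ι : Type*} [DecidableEq ι] {m : ℝ} {α y : ι → ℝ}

theorem sq_add_wsum_le_interpolant (hm : 0 < m) (hα : ∀ i, m ≤ α i) (hy : ∀ i, 0 ≤ y i)
    (t : Finset ι) {p a : ℝ} (hmp : m ≤ p) (ha : 0 ≤ a) (hya : ∀ i ∈ t, y i ≤ a)
    (hsum : p + ∑ i ∈ t, α i = 1) :
    (p * a + ∑ i ∈ t, α i * y i) ^ 2 ≤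
      (1 - m) * (p * a ^ 2 + ∑ i ∈ t, α i * y i ^ 2) +
        m * ((a ^ 2) ^ p * ∏ i ∈ t, (y i ^ 2) ^ α i) := by
  induction t using Finset.induction_on_max_value y generalizing p a with
  | empty =>
    obtain rfl : p = 1 := by simpa using hsum
    simp only [sum_empty, prod_empty, rpow_one]
    exact le_of_eq (by ring)
  | insert j t hj hmax ih =>
    rw [sum_insert hj] at hsum
    rw [sum_insert hj, sum_insert hj, prod_insert hj]
    have hrest : 0 ≤ ∑ i ∈ t, α i := sum_nonneg fun i _ => hm.le.trans (hα i)
    have hpq : 0 < p + α j := by linarith [hα j]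
    set s := (p * a + α j * y j) / (p + α j)
    have hs : (p + α j) * s = p * a + α j * y j := mul_div_cancel₀ _ hpq.ne'
    have hjs : y j ≤ s := by
      rw [le_div_iff₀ hpq]
      nlinarith [hya j (mem_insert_self j t), hm.trans_le hmp]
    have hts : ∀ i ∈ t, y i ≤ s := fun i hi => (hmax i hi).trans hjs
    have hR : ∏ i ∈ t, (y i ^ 2) ^ α i ≤ (s ^ 2) ^ (1 - (p + α j)) := by
      rw [show 1 - (p + α j) = ∑ i ∈ t, α i by linarith,
        rpow_sum_of_nonneg (sq_nonneg s) fun i _ => hm.le.trans (hα i)]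
      exact prod_le_prod (fun i _ => by positivity) fun i hi =>
        rpow_le_rpow (sq_nonneg _) (pow_le_pow_left₀ (hy i) (hts i hi) 2) (hm.le.trans (hα i))
    have hmerge := interpolant_merge_le hm hmp (hα j) (by linarith) ha (hy j) hs hR
    have hih := ih (p := p + α j) (a := s) (hmp.trans (by linarith [hα j, hm]))
      ((hy j).trans hjs) hts (by linarith)
    rw [← add_assoc, ← hs]
    linarith

theorem mul_wsum_sub_prod_le_wsum_sub_sq [Fintype ι] (hm : 0 < m) (hα : ∀ i, m ≤ α i)
    (hy : ∀ i, 0 ≤ y i) (hsum : ∑ i, α i = 1) :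
    m * (∑ i, α i * y i ^ 2 - ∏ i, (y i ^ 2) ^ α i) ≤
      ∑ i, α i * y i ^ 2 - (∑ i, α i * y i) ^ 2 := by
  obtain ⟨k, -, hk⟩ := exists_max_image univ y
    (nonempty_of_sum_ne_zero (hsum.trans_ne one_ne_zero))
  have key := sq_add_wsum_le_interpolant hm hα hy (univ.erase k) (hα k) (hy k)
    (fun i _ => hk i (mem_univ i)) (by rw [add_sum_erase _ _ (mem_univ k), hsum])
  rw [add_sum_erase univ (fun i => α i * y i) (mem_univ k),
    add_sum_erase univ (fun i => α i * y i ^ 2) (mem_univ k),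
    mul_prod_erase univ (fun i => (y i ^ 2) ^ α i) (mem_univ k)] at key
  linarith

end Weighted

theorem amgm_gap_le_variance_general (n : ℕ)
    (x α : Fin n → ℝ) (hx : ∀ i, 0 ≤ x i)
    (hα : ∀ i, 0 < α i) (hsum : ∑ i, α i = 1) :
    ∑ i, α i * x i - ∏ i, x i ^ α i ≤
      (1 / ⨅ i, α i) * (∑ i, α i * x i - (∑ i, α i * Real.sqrt (x i)) ^ 2) := by
  have : Nonempty (Fin n) :=
    univ_nonempty_iff.1 (nonempty_of_sum_ne_zero (hsum.trans_ne one_ne_zero))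
  obtain ⟨k, hk⟩ := exists_eq_ciInf_of_finite (f := α)
  have hm : 0 < ⨅ i, α i := hk ▸ hα k
  have key := mul_wsum_sub_prod_le_wsum_sub_sq hm (ciInf_le (Finite.bddBelow_range α))
    (fun i => sqrt_nonneg (x i)) hsum
  simp only [sq_sqrt (hx _)] at key
  rw [one_div_mul_eq_div, le_div_iff₀ hm]
  linarith

theorem amgm_gap_le_variance (n : ℕ) (hn : 2 ≤ n)
    (x α : Fin n → ℝ) (hx : ∀ i, 0 ≤ x i)
    (hα : ∀ i, 0 < α i) (hsum : ∑ i, α i = 1) :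
    ∑ i, α i * x i - ∏ i, x i ^ α i ≤
      (1 / ⨅ i, α i) * (∑ i, α i * x i - (∑ i, α i * Real.sqrt (x i)) ^ 2) :=
  amgm_gap_le_variance_general n x α hx hα hsum
end

section
/- Let n ≥ 2, X = (x₁,…,xₙ) with xᵢ ≥ 0, and α = (α₁,…,αₙ) with αᵢ > 0 and Σ αᵢ = 1. Then (1/(1−α_min))·Var_α(X^{1/2}) ≤ Σ αᵢ xᵢ − Π xᵢ^{αᵢ}. -/
theorem variance_le_amgm_gap (n : ℕ) (hn : 2 ≤ n)
    (x α : Fin n → ℝ) (hx : ∀ i, 0 ≤ x i)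
    (hα : ∀ i, 0 < α i) (hsum : ∑ i, α i = 1) :
    (1 / (1 - ⨅ i, α i)) * (∑ i, α i * x i - (∑ i, α i * Real.sqrt (x i)) ^ 2) ≤
      ∑ i, α i * x i - ∏ i, x i ^ α i := by
  have hne : Nonempty (Fin n) := ⟨⟨0, by omega⟩⟩
  have hnt : Nontrivial (Fin n) := Fin.nontrivial_iff_two_le.mpr hn
  set m : ℝ := ⨅ i, α i with hm
  have hmle : ∀ i, m ≤ α i := fun i => ciInf_le (Finite.bddBelow_range α) i
  obtain ⟨i₀, hi₀⟩ : ∃ i, m = α i := by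
    obtain ⟨i, hi⟩ := Finite.exists_min α
    exact ⟨i, le_antisymm (hmle i) (le_ciInf hi)⟩
  have hm0 : 0 < m := hi₀ ▸ hα i₀
  have hm1 : m < 1 := by
    obtain ⟨j, hj⟩ := exists_ne i₀
    calc m = α i₀ := hi₀
    _ < ∑ i, α i := Finset.single_lt_sum hj (Finset.mem_univ _) (Finset.mem_univ _)
        (hα j) (fun k _ _ => (hα k).le)
    _ = 1 := hsum
  set c : ℝ := 1 - m with hc
  have hcpos : 0 < c := by simp [hc]; linarith
  set y : Fin n → ℝ := fun i => Real.sqrt (x i) with hy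
  have hy0 : ∀ i, 0 ≤ y i := fun i => Real.sqrt_nonneg _
  have hysq : ∀ i, y i ^ 2 = x i := fun i => Real.sq_sqrt (hx i)
  set S : ℝ := ∑ i, α i * y i with hS
  -- the non-normalized weights on pairs
  set w : Fin n × Fin n → ℝ :=
    fun p => α p.1 * α p.2 - (if p.1 = p.2 then α p.1 * m else 0) with hw
  have hw0 : ∀ p, 0 ≤ w p := by
    rintro ⟨i, j⟩
    by_cases h : i = j
    · subst h
      simp only [hw, if_true, eq_self_iff_true]
      nlinarith [hα i, hmle i]
    · simp only [hw, h, if_neg, not_false_iff, sub_zero]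
      nlinarith [hα i, hα j]
  have hrow : ∀ i, ∑ j, w (i, j) = α i * c := by
    intro i
    simp only [hw, Finset.sum_sub_distrib, ← Finset.mul_sum, hsum, Finset.sum_ite_eq, Finset.sum_ite_eq',
      Finset.mem_univ, if_pos, hc]
    ring
  have hcol : ∀ j, ∑ i, w (i, j) = α j * c := by
    intro j
    have : ∀ i, w (i, j) = α i * α j - (if i = j then α j * m else 0) := by
      intro i
      by_cases h : i = j <;> · simp [hw, h]; try ring
    simp only [this, Finset.sum_sub_distrib, ← Finset.sum_mul, hsum, Finset.sum_ite_eq',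
      Finset.mem_univ, if_pos, hc]
    ring
  have hsumw : ∑ p : Fin n × Fin n, w p = c := by
    rw [Fintype.sum_prod_type]
    simp only [hrow, ← Finset.sum_mul, hsum, one_mul]
  -- key: weighted sum of products
  have hsumwz : ∑ p : Fin n × Fin n, w p * (y p.1 * y p.2)
      = S ^ 2 - m * ∑ i, α i * x i := by
    have e1 : ∀ p : Fin n × Fin n, w p * (y p.1 * y p.2)
        = (α p.1 * y p.1) * (α p.2 * y p.2)
          - (if p.1 = p.2 then m * (α p.1 * x p.1) else 0) := by
      intro p
      by_cases h : p.1 = p.2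
      · obtain ⟨i, j⟩ := p
        simp only at h
        subst h
        simp only [hw, if_pos]
        rw [← hysq i]; ring
      · simp only [hw, h, if_neg, not_false_iff, sub_zero]; ring
    rw [Finset.sum_congr rfl (fun p _ => e1 p), Finset.sum_sub_distrib]
    rw [Fintype.sum_prod_type]
    have e2 : ∀ i : Fin n, ∑ j, (if i = j then m * (α i * x i) else 0)
        = m * (α i * x i) := by
      intro i; simp
    rw [Fintype.sum_prod_type]
    simp only [← Finset.sum_mul, ← Finset.mul_sum, e2, hS]
    rw [sq, Finset.sum_mul_sum, Finset.mul_sum]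
  -- the key inequality
  have hkey : c * ∏ i, x i ^ α i ≤ S ^ 2 - m * ∑ i, α i * x i := by
    by_cases hpos : ∀ i, 0 < x i
    · -- AM-GM over pairs
      have hypos : ∀ i, 0 < y i := fun i => Real.sqrt_pos.mpr (hpos i)
      have hgm := Real.geom_mean_le_arith_mean_weighted Finset.univ
        (fun p : Fin n × Fin n => w p / c) (fun p => y p.1 * y p.2)
        (fun p _ => div_nonneg (hw0 p) hcpos.le)
        (by rw [← Finset.sum_div, hsumw, div_self hcpos.ne'])
        (fun p _ => mul_nonneg (hy0 _) (hy0 _))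
      have hprod : ∏ p : Fin n × Fin n, (y p.1 * y p.2) ^ (w p / c)
          = ∏ i, x i ^ α i := by
        have e3 : ∀ p : Fin n × Fin n, (y p.1 * y p.2) ^ (w p / c)
            = y p.1 ^ (w p / c) * y p.2 ^ (w p / c) :=
          fun p => Real.mul_rpow (hy0 _) (hy0 _)
        rw [Finset.prod_congr rfl (fun p _ => e3 p), Finset.prod_mul_distrib]
        have e4 : ∏ p : Fin n × Fin n, y p.1 ^ (w p / c) = ∏ i, y i ^ α i := by
          rw [Fintype.prod_prod_type]
          refine Finset.prod_congr rfl (fun i _ => ?_)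
          rw [← Real.rpow_sum_of_pos (hypos i), ← Finset.sum_div, hrow,
            mul_div_assoc, div_self hcpos.ne', mul_one]
        have e5 : ∏ p : Fin n × Fin n, y p.2 ^ (w p / c) = ∏ i, y i ^ α i := by
          rw [Fintype.prod_prod_type]
          rw [Finset.prod_comm]
          refine Finset.prod_congr rfl (fun j _ => ?_)
          rw [← Real.rpow_sum_of_pos (hypos j), ← Finset.sum_div, hcol,
            mul_div_assoc, div_self hcpos.ne', mul_one]
        rw [e4, e5, ← Finset.prod_mul_distrib]
        refine Finset.prod_congr rfl (fun i _ => ?_)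
        rw [← Real.rpow_add (hypos i), show α i + α i = 2 * α i by ring,
          Real.rpow_mul (hy0 i), Real.rpow_two, hysq]
      have hsum2 : ∑ p : Fin n × Fin n, (w p / c) * (y p.1 * y p.2)
          = (S ^ 2 - m * ∑ i, α i * x i) / c := by
        rw [← hsumwz, Finset.sum_div]
        exact Finset.sum_congr rfl (fun p _ => by ring)
      rw [hprod, hsum2] at hgm
      rw [mul_comm, ← le_div_iff₀ hcpos]
      exact hgm
    · -- some x i = 0 : product is zero; S^2 ≥ m * ∑ α x
      push_neg at hpos
      obtain ⟨i, hi⟩ := hpos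
      have hxi : x i = 0 := le_antisymm hi (hx i)
      have hprod0 : ∏ j, x j ^ α j = 0 := by
        apply Finset.prod_eq_zero (Finset.mem_univ i)
        rw [hxi, Real.zero_rpow (hα i).ne']
      rw [hprod0, mul_zero]
      have h1 : m * ∑ j, α j * x j ≤ ∑ j, (α j * y j) ^ 2 := by
        rw [Finset.mul_sum]
        apply Finset.sum_le_sum
        intro j _
        rw [← hysq j, mul_pow]
        nlinarith [mul_le_mul_of_nonneg_right (hmle j) (mul_nonneg (hα j).le (sq_nonneg (y j)))]
      have h2 : ∑ j, (α j * y j) ^ 2 ≤ S ^ 2 := by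
        apply Finset.sum_sq_le_sq_sum_of_nonneg
        intro j _
        exact mul_nonneg (hα j).le (hy0 j)
      linarith
  -- conclude
  rw [one_div, inv_mul_le_iff₀ (by simpa [hc] using hcpos : (0:ℝ) < 1 - m)]
  rw [hc] at hkey
  nlinarith [hkey]
end

section
/- Let n ≥ 2 and X = (x₁,…,xₙ) with xᵢ ≥ 0. Then (n/(n−1))·Var(X^{1/2}) ≤ (1/n)Σ xᵢ − (Π xᵢ)^{1/n} ≤ n·Var(X^{1/2}). -/
/-!
Write `a i = √(x i)`, `S = ∑ a i`, `Q = ∑ a i ^ 2` and let `G` be the geometric mean of the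
`a i`, so that `Var(X^{1/2}) = Q / n - (S / n) ^ 2` and `(∏ x i) ^ (1 / n) = G ^ 2`. The two
bounds become `n (n - 1) G² ≤ S² - Q` and `S² ≤ (n - 1) Q + n G²`.

The first is AM-GM for the `n (n - 1)` products `a i * a j`, `i ≠ j`: they sum to `S² - Q` and
their geometric mean is `G²`.

The second goes by induction, adding the smallest value `t` to `m` values with geometric mean
`g`; the new geometric mean `G'` satisfies `G' ^ (m + 1) = t g ^ m`. Cauchy-Schwarz and AM-GM
give `∑ (a j - t)² ≥ m (g - t)²` (as `t ≤ g`), and weighted AM-GM gives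
`2 m g t ≤ (m - 1) t² + (m + 1) G'²`; together with the induction hypothesis these add up to
the claim.
-/

open Finset

theorem two_mul_mul_le_of_pow_succ_eq (m : ℕ) {G t g : ℝ} (hG : 0 ≤ G) (ht : 0 ≤ t)
    (hg : 0 ≤ g) (h : G ^ (m + 1) = t * g ^ m) :
    2 * m * (g * t) ≤ (m - 1) * t ^ 2 + (m + 1) * G ^ 2 := by
  rcases Nat.eq_zero_or_pos m with rfl | hm
  · simp only [zero_add, pow_one, pow_zero, mul_one] at h
    simp [h]
  have hm₀ : (0 : ℝ) < m := by exact_mod_cast hm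
  have hm₁ : (1 : ℝ) ≤ m := by exact_mod_cast hm
  have hw₁ : 0 ≤ ((m : ℝ) + 1) / (2 * m) := by positivity
  have hw₂ : 0 ≤ ((m : ℝ) - 1) / (2 * m) := div_nonneg (by linarith) (by positivity)
  have hw : ((m : ℝ) + 1) / (2 * m) + ((m : ℝ) - 1) / (2 * m) = 1 := by field_simp; ring
  have hG' : (G ^ 2) ^ (((m : ℝ) + 1) / (2 * m)) = t ^ ((m : ℝ)⁻¹) * g := by
    rw [← Real.rpow_natCast G 2, ← Real.rpow_mul hG,
      show ((2 : ℕ) : ℝ) * (((m : ℝ) + 1) / (2 * m)) =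
          ((m + 1 : ℕ) : ℝ) * (m : ℝ)⁻¹ by
        push_cast; field_simp,
      Real.rpow_mul hG, Real.rpow_natCast, h, Real.mul_rpow ht (by positivity),
      Real.pow_rpow_inv_natCast hg hm.ne']
  have ht' : (t ^ 2) ^ (((m : ℝ) - 1) / (2 * m)) = t ^ (((m : ℝ) - 1) / m) := by
    rw [← Real.rpow_natCast t 2, ← Real.rpow_mul ht]
    congr 1
    push_cast
    field_simp
  have hgt :
      (G ^ 2) ^ (((m : ℝ) + 1) / (2 * m)) * (t ^ 2) ^ (((m : ℝ) - 1) / (2 * m)) = g * t := by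
    have hexp : (m : ℝ)⁻¹ + ((m : ℝ) - 1) / m = 1 := by field_simp; ring
    rw [hG', ht', mul_right_comm, ← Real.rpow_add' ht (by rw [hexp]; exact one_ne_zero), hexp,
      Real.rpow_one, mul_comm]
  have amgm := Real.geom_mean_le_arith_mean2_weighted hw₁ hw₂ (sq_nonneg G) (sq_nonneg t) hw
  rw [hgt] at amgm
  calc 2 * m * (g * t)
      ≤ 2 * m * (((m : ℝ) + 1) / (2 * m) * G ^ 2 + ((m : ℝ) - 1) / (2 * m) * t ^ 2) := by
        gcongr
    _ = (m - 1) * t ^ 2 + (m + 1) * G ^ 2 := by field_simp; ring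

namespace Finset

variable {ι : Type*}

theorem prod_offDiag_fst [DecidableEq ι] {M : Type*} [CommMonoid M] (s : Finset ι)
    (f : ι → M) :
    ∏ p ∈ s.offDiag, f p.1 = ∏ i ∈ s, f i ^ (#s - 1) := by
  rw [prod_finset_product' _ s (fun i => s.erase i) (f := fun i _ => f i) (by simp; tauto)]
  refine prod_congr rfl fun i hi => ?_
  rw [prod_const, card_erase_of_mem hi]

theorem prod_offDiag_snd [DecidableEq ι] {M : Type*} [CommMonoid M] (s : Finset ι)
    (f : ι → M) :
    ∏ p ∈ s.offDiag, f p.2 = ∏ i ∈ s, f i ^ (#s - 1) := by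
  rw [prod_finset_product_right' _ s (fun i => s.erase i) (f := fun _ i => f i)
    (by simp; tauto)]
  refine prod_congr rfl fun i hi => ?_
  rw [prod_const, card_erase_of_mem hi]

theorem prod_offDiag_mul [DecidableEq ι] {M : Type*} [CommMonoid M] (s : Finset ι)
    (f : ι → M) :
    ∏ p ∈ s.offDiag, f p.1 * f p.2 = (∏ i ∈ s, f i) ^ (2 * (#s - 1)) := by
  rw [prod_mul_distrib, prod_offDiag_fst, prod_offDiag_snd, ← sq, prod_pow, ← pow_mul, mul_comm]

theorem sum_offDiag_mul [DecidableEq ι] {R : Type*} [CommRing R] (s : Finset ι) (f : ι → R) :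
    ∑ p ∈ s.offDiag, f p.1 * f p.2 = (∑ i ∈ s, f i) ^ 2 - ∑ i ∈ s, f i ^ 2 := by
  rw [sq, sum_mul_sum, ← sum_product', ← diag_union_offDiag,
    sum_union (disjoint_diag_offDiag _), sum_diag]
  simp [sq]

noncomputable def geomMean (s : Finset ι) (a : ι → ℝ) : ℝ :=
  (∏ i ∈ s, a i) ^ ((#s : ℝ)⁻¹)

variable {s : Finset ι} {a : ι → ℝ}

theorem geomMean_nonneg (ha : ∀ i ∈ s, 0 ≤ a i) : 0 ≤ s.geomMean a :=
  Real.rpow_nonneg (prod_nonneg ha) _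

theorem geomMean_pow_card (ha : ∀ i ∈ s, 0 ≤ a i) : s.geomMean a ^ #s = ∏ i ∈ s, a i := by
  rcases s.eq_empty_or_nonempty with rfl | hs
  · simp
  · exact Real.rpow_inv_natCast_pow (prod_nonneg ha) hs.card_pos.ne'

theorem card_mul_geomMean_le_sum (ha : ∀ i ∈ s, 0 ≤ a i) :
    #s * s.geomMean a ≤ ∑ i ∈ s, a i := by
  rcases s.eq_empty_or_nonempty with rfl | hs
  · simp
  have hcard : (0 : ℝ) < #s := by exact_mod_cast hs.card_pos
  have h := Real.geom_mean_le_arith_mean s 1 a (fun _ _ => zero_le_one) (by simpa using hcard) ha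
  simp only [Pi.one_apply, Real.rpow_one, one_mul, sum_const, nsmul_eq_mul, mul_one] at h
  rwa [geomMean, ← le_div_iff₀' hcard]

theorem le_geomMean {t : ℝ} (ht : 0 ≤ t) (hta : ∀ i ∈ s, t ≤ a i) (hs : s.Nonempty) :
    t ≤ s.geomMean a := by
  have hcard : #s ≠ 0 := hs.card_pos.ne'
  calc t = (t ^ #s) ^ ((#s : ℝ)⁻¹) := (Real.pow_rpow_inv_natCast ht hcard).symm
    _ ≤ s.geomMean a := by
      refine Real.rpow_le_rpow (by positivity) ?_ (by positivity)
      simpa using prod_le_prod (fun _ _ => ht) hta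

theorem card_mul_sq_geomMean_sub_le {t : ℝ} (ha : ∀ i ∈ s, 0 ≤ a i) (ht : 0 ≤ t)
    (hta : ∀ i ∈ s, t ≤ a i) :
    #s * (s.geomMean a - t) ^ 2 ≤ ∑ i ∈ s, (a i - t) ^ 2 := by
  rcases s.eq_empty_or_nonempty with rfl | hs
  · simp
  have hcard : (0 : ℝ) < #s := by exact_mod_cast hs.card_pos
  have hgap : #s * (s.geomMean a - t) ≤ ∑ i ∈ s, (a i - t) := by
    rw [sum_sub_distrib, sum_const, nsmul_eq_mul]
    linarith [card_mul_geomMean_le_sum ha]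
  have hgap_nonneg : 0 ≤ #s * (s.geomMean a - t) :=
    mul_nonneg hcard.le (sub_nonneg.2 (le_geomMean ht hta hs))
  refine le_of_mul_le_mul_left ?_ hcard
  calc #s * (#s * (s.geomMean a - t) ^ 2) = (#s * (s.geomMean a - t)) ^ 2 := by ring
    _ ≤ (∑ i ∈ s, (a i - t)) ^ 2 := pow_le_pow_left₀ hgap_nonneg hgap 2
    _ ≤ #s * ∑ i ∈ s, (a i - t) ^ 2 := sq_sum_le_card_mul_sum_sq

theorem geomMean_offDiag_mul [DecidableEq ι] (ha : ∀ i ∈ s, 0 ≤ a i) (hs : 2 ≤ #s) :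
    s.offDiag.geomMean (fun p => a p.1 * a p.2) = s.geomMean a ^ 2 := by
  have hprod : ∀ p ∈ s.offDiag, 0 ≤ a p.1 * a p.2 := fun p hp =>
    mul_nonneg (ha _ (mem_offDiag.1 hp).1) (ha _ (mem_offDiag.1 hp).2.1)
  have hcard : #s.offDiag = #s * (#s - 1) := by rw [offDiag_card, Nat.mul_sub_one]
  refine (pow_left_inj₀ (geomMean_nonneg hprod) (pow_nonneg (geomMean_nonneg ha) 2)
    (n := #s * (#s - 1)) (Nat.mul_ne_zero (by omega) (by omega))).1 ?_
  calc s.offDiag.geomMean (fun p => a p.1 * a p.2) ^ (#s * (#s - 1))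
      = ∏ p ∈ s.offDiag, a p.1 * a p.2 := by rw [← hcard, geomMean_pow_card hprod]
    _ = (s.geomMean a ^ #s) ^ (2 * (#s - 1)) := by rw [prod_offDiag_mul, geomMean_pow_card ha]
    _ = (s.geomMean a ^ 2) ^ (#s * (#s - 1)) := by ring

theorem card_mul_card_sub_one_mul_geomMean_sq_le [DecidableEq ι] (ha : ∀ i ∈ s, 0 ≤ a i) :
    (#s : ℝ) * (#s - 1) * s.geomMean a ^ 2 ≤ (∑ i ∈ s, a i) ^ 2 - ∑ i ∈ s, a i ^ 2 := by
  have hprod : ∀ p ∈ s.offDiag, 0 ≤ a p.1 * a p.2 := fun p hp =>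
    mul_nonneg (ha _ (mem_offDiag.1 hp).1) (ha _ (mem_offDiag.1 hp).2.1)
  rw [← sum_offDiag_mul]
  rcases lt_or_ge #s 2 with hs | hs
  · have hcard : (#s : ℝ) * (#s - 1) = 0 := by
      rcases (by omega : #s = 0 ∨ #s = 1) with h | h <;> simp [h]
    rw [hcard, zero_mul]
    exact sum_nonneg hprod
  · have amgm := card_mul_geomMean_le_sum hprod
    rwa [geomMean_offDiag_mul ha hs, offDiag_card, Nat.cast_sub (Nat.le_mul_self _),
      Nat.cast_mul, ← mul_sub_one] at amgm

theorem sq_sum_le_card_sub_one_mul_sum_sq_add [DecidableEq ι] (ha : ∀ i ∈ s, 0 ≤ a i) :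
    (∑ i ∈ s, a i) ^ 2 ≤ (#s - 1) * ∑ i ∈ s, a i ^ 2 + #s * s.geomMean a ^ 2 := by
  induction s using Finset.induction_on_min_value a with
  | empty => simp
  | insert i s hi hmin ih =>
    have ha' : ∀ j ∈ s, 0 ≤ a j := fun j hj => ha j (mem_insert_of_mem hj)
    have hai : 0 ≤ a i := ha i (mem_insert_self i s)
    have hG : (insert i s).geomMean a ^ (#s + 1) = a i * s.geomMean a ^ #s := by
      rw [← card_insert_of_notMem hi, geomMean_pow_card ha, geomMean_pow_card ha', prod_insert hi]
    have hmean :=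
      two_mul_mul_le_of_pow_succ_eq #s (geomMean_nonneg ha) hai (geomMean_nonneg ha') hG
    have hdev := card_mul_sq_geomMean_sub_le ha' hai hmin
    have hdev_sum : ∑ j ∈ s, (a j - a i) ^ 2
        = ∑ j ∈ s, a j ^ 2 - 2 * a i * ∑ j ∈ s, a j + #s * a i ^ 2 := by
      rw [sum_congr rfl fun j _ => sub_sq (a j) (a i), sum_add_distrib, sum_sub_distrib,
        ← sum_mul, ← mul_sum, sum_const, nsmul_eq_mul]
      ring
    rw [sum_insert hi, sum_insert hi, card_insert_of_notMem hi, Nat.cast_succ]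
    linarith [ih ha']

end Finset

theorem equal_weight_variance_bounds (n : ℕ) (hn : 2 ≤ n)
    (x : Fin n → ℝ) (hx : ∀ i, 0 ≤ x i) :
    ((n : ℝ) / (n - 1)) *
        ((1 / n) * ∑ i, x i - ((1 / n) * ∑ i, Real.sqrt (x i)) ^ 2) ≤
      (1 / n) * ∑ i, x i - (∏ i, x i) ^ ((1 : ℝ) / n) ∧
    (1 / n) * ∑ i, x i - (∏ i, x i) ^ ((1 : ℝ) / n) ≤
      (n : ℝ) * ((1 / n) * ∑ i, x i - ((1 / n) * ∑ i, Real.sqrt (x i)) ^ 2) := by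
  have hsqrt : ∀ i ∈ univ, 0 ≤ Real.sqrt (x i) := fun i _ => Real.sqrt_nonneg _
  have hsum : ∑ i, x i = ∑ i, Real.sqrt (x i) ^ 2 :=
    sum_congr rfl fun i _ => (Real.sq_sqrt (hx i)).symm
  have hgeom : (∏ i, x i) ^ ((1 : ℝ) / n) = univ.geomMean (fun i => Real.sqrt (x i)) ^ 2 := by
    rw [geomMean, Real.rpow_pow_comm (prod_nonneg hsqrt), ← prod_pow, card_univ, Fintype.card_fin,
      one_div]
    simp only [Real.sq_sqrt (hx _)]
  have lower := card_mul_card_sub_one_mul_geomMean_sq_le hsqrt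
  have upper := sq_sum_le_card_sub_one_mul_sum_sq_add hsqrt
  rw [card_univ, Fintype.card_fin] at lower upper
  rw [hsum, hgeom]
  have hn' : (1 : ℝ) < n := by exact_mod_cast hn
  constructor
  · rw [div_mul_eq_mul_div, div_le_iff₀ (by linarith)]
    field_simp
    linarith
  · field_simp
    linarith
end

section
/- For n ≥ 2, let X have x₁ = 1 and x₂ = ⋯ = xₙ = 0. Then EX − ΠX = 1/n = (n/(n−1))·Var(X^{1/2}); i.e., the lower bound (n/(n−1))·Var(X^{1/2}) ≤ EX − ΠX holds with equality. -/
theorem lower_bound_sharp (n : ℕ) (hn : 2 ≤ n)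
    (x : Fin n → ℝ) (hx : x = fun i => if i = (⟨0, by omega⟩ : Fin n) then 1 else 0) :
    (1 / n) * ∑ i, x i - (∏ i, x i) ^ ((1 : ℝ) / n) = 1 / n ∧
    (1 / n : ℝ) = ((n : ℝ) / (n - 1)) *
      ((1 / n) * ∑ i, x i - ((1 / n) * ∑ i, Real.sqrt (x i)) ^ 2) := by
  subst hx
  have hn0 : (n : ℝ) ≠ 0 := by positivity
  have hsum : ∑ i : Fin n, (if i = (⟨0, by omega⟩ : Fin n) then (1:ℝ) else 0) = 1 := by
    simp
  have hsqrt : ∑ i : Fin n, Real.sqrt (if i = (⟨0, by omega⟩ : Fin n) then (1:ℝ) else 0) = 1 := by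
    rw [Finset.sum_congr rfl (fun i _ => ?_)]
    · exact hsum
    · split <;> simp
  have hprod : ∏ i : Fin n, (if i = (⟨0, by omega⟩ : Fin n) then (1:ℝ) else 0) = 0 := by
    apply Finset.prod_eq_zero (Finset.mem_univ (⟨1, by omega⟩ : Fin n))
    simp [Fin.ext_iff]
  simp only [hsum, hsqrt, hprod]
  rw [Real.zero_rpow (by positivity)]
  constructor
  · ring
  · have hn1 : (n : ℝ) - 1 ≠ 0 := by
      have : (2:ℝ) ≤ n := by exact_mod_cast hn
      linarith
    field_simp
end

section
/- For n ≥ 2, let X have x₁ = ⋯ = x_{n−1} = 1 and xₙ = 0. Then EX − ΠX = (n−1)/n = n·Var(X^{1/2}); i.e., the upper bound EX − ΠX ≤ n·Var(X^{1/2}) holds with equality. -/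
/-!
The product vanishes because `xₙ = 0`, so `EX − ΠX = EX = (n − 1)/n`. Since every `xᵢ` is `0` or
`1`, `X^{1/2} = X`, and the variance of a `0`/`1` vector with mean `m` is `m (1 − m)`; for
`m = (n − 1)/n` this is `(n − 1)/n²`.
-/

open Finset

theorem sum_ite_eq_zero_else_one {ι R : Type*} [Fintype ι] [DecidableEq ι]
    [AddCommGroupWithOne R] (j : ι) :
    ∑ i, (if i = j then (0 : R) else 1) = Fintype.card ι - 1 := by
  simp only [sum_ite, sum_const_zero, sum_const, nsmul_one, zero_add, filter_ne',
    card_erase_of_mem (mem_univ j), card_univ]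
  rw [Nat.cast_pred (Fintype.card_pos_iff.mpr ⟨j⟩)]

theorem Real.sqrt_eq_self_of_eq_zero_or_eq_one {a : ℝ} (h : a = 0 ∨ a = 1) : √a = a := by
  rcases h with rfl | rfl <;> simp

theorem mean_sub_sq_mean_sqrt_of_eq_zero_or_eq_one {ι : Type*} [Fintype ι] (c : ℝ)
    (x : ι → ℝ) (hx : ∀ i, x i = 0 ∨ x i = 1) :
    c * ∑ i, x i - (c * ∑ i, √(x i)) ^ 2 = c * (∑ i, x i) * (1 - c * ∑ i, x i) := by
  simp only [Real.sqrt_eq_self_of_eq_zero_or_eq_one (hx _)]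
  ring

theorem upper_bound_sharp (n : ℕ) (hn : 2 ≤ n)
    (x : Fin n → ℝ) (hx : x = fun i => if i = (⟨n - 1, by omega⟩ : Fin n) then 0 else 1) :
    (1 / n) * ∑ i, x i - (∏ i, x i) ^ ((1 : ℝ) / n) = (n - 1) / n ∧
    ((n : ℝ) - 1) / n = (n : ℝ) *
      ((1 / n) * ∑ i, x i - ((1 / n) * ∑ i, Real.sqrt (x i)) ^ 2) := by
  set j : Fin n := ⟨n - 1, by omega⟩
  have hsum : ∑ i, x i = n - 1 := by
    simp only [hx, sum_ite_eq_zero_else_one, Fintype.card_fin]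
  have hprod : ∏ i, x i = 0 := prod_eq_zero (mem_univ j) (by simp [hx])
  have hx01 : ∀ i, x i = 0 ∨ x i = 1 := fun i => by
    simp only [hx]; split_ifs <;> simp
  constructor
  · rw [hsum, hprod, Real.zero_rpow (by positivity)]
    ring
  · rw [mean_sub_sq_mean_sqrt_of_eq_zero_or_eq_one _ x hx01, hsum]
    field_simp
    ring
end

section
/- For any real vector Y = (y₁,…,yₙ) and two weight vectors α, β with positive entries summing to 1, min_k(α_k/β_k) · Var_β(Y) ≤ Var_α(Y) ≤ max_k(α_k/β_k) · Var_β(Y). -/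
/-! Var_w(Y) is the minimum over c of ∑ wᵢ (yᵢ − c)², attained at the w-mean. Comparing the
α- and β-weighted sums term by term at a common centre therefore compares the variances: for the
lower bound centre at the α-mean, for the upper bound at the β-mean. -/

open Finset

variable {ι : Type*} [Fintype ι]

noncomputable def weightedVariance (w y : ι → ℝ) : ℝ :=
  ∑ i, w i * y i ^ 2 - (∑ i, w i * y i) ^ 2

section

variable {w : ι → ℝ} (y : ι → ℝ)

theorem sum_mul_sq_sub_eq_weightedVariance_add (hw : ∑ i, w i = 1) (c : ℝ) :
    ∑ i, w i * (y i - c) ^ 2 = weightedVariance w y + (∑ i, w i * y i - c) ^ 2 := by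
  have expand : ∀ i, w i * (y i - c) ^ 2 = w i * y i ^ 2 - 2 * c * (w i * y i) + c ^ 2 * w i :=
    fun i => by ring
  simp only [expand, sum_add_distrib, sum_sub_distrib, ← mul_sum, hw, weightedVariance]
  ring

theorem weightedVariance_le_sum_mul_sq_sub (hw : ∑ i, w i = 1) (c : ℝ) :
    weightedVariance w y ≤ ∑ i, w i * (y i - c) ^ 2 := by
  rw [sum_mul_sq_sub_eq_weightedVariance_add y hw c]
  exact le_add_of_nonneg_right (sq_nonneg _)

theorem weightedVariance_eq_sum_mul_sq_sub_mean (hw : ∑ i, w i = 1) :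
    weightedVariance w y = ∑ i, w i * (y i - ∑ j, w j * y j) ^ 2 := by
  rw [sum_mul_sq_sub_eq_weightedVariance_add y hw, sub_self, zero_pow two_ne_zero, add_zero]

end

section

variable {α β : ι → ℝ} (y : ι → ℝ) (hαs : ∑ i, α i = 1) (hβs : ∑ i, β i = 1)
include hαs hβs

theorem mul_weightedVariance_le_of_mul_le {c : ℝ} (hc : 0 ≤ c) (h : ∀ i, c * β i ≤ α i) :
    c * weightedVariance β y ≤ weightedVariance α y := by
  set μα := ∑ i, α i * y i
  calc c * weightedVariance β y ≤ c * ∑ i, β i * (y i - μα) ^ 2 :=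
        mul_le_mul_of_nonneg_left (weightedVariance_le_sum_mul_sq_sub y hβs μα) hc
    _ = ∑ i, c * β i * (y i - μα) ^ 2 := by simp only [mul_sum, mul_assoc]
    _ ≤ ∑ i, α i * (y i - μα) ^ 2 :=
        sum_le_sum fun i _ => mul_le_mul_of_nonneg_right (h i) (sq_nonneg _)
    _ = weightedVariance α y := (weightedVariance_eq_sum_mul_sq_sub_mean y hαs).symm

theorem weightedVariance_le_mul_of_le_mul {C : ℝ} (h : ∀ i, α i ≤ C * β i) :
    weightedVariance α y ≤ C * weightedVariance β y := by
  set μβ := ∑ i, β i * y i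
  calc weightedVariance α y ≤ ∑ i, α i * (y i - μβ) ^ 2 :=
        weightedVariance_le_sum_mul_sq_sub y hαs μβ
    _ ≤ ∑ i, C * β i * (y i - μβ) ^ 2 :=
        sum_le_sum fun i _ => mul_le_mul_of_nonneg_right (h i) (sq_nonneg _)
    _ = C * ∑ i, β i * (y i - μβ) ^ 2 := by simp only [mul_sum, mul_assoc]
    _ = C * weightedVariance β y := by rw [weightedVariance_eq_sum_mul_sq_sub_mean y hβs]

end

theorem variance_weight_comparison_general (n : ℕ)
    (y α β : Fin n → ℝ)
    (hα : ∀ i, 0 < α i) (hαs : ∑ i, α i = 1)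
    (hβ : ∀ i, 0 < β i) (hβs : ∑ i, β i = 1) :
    (⨅ k, α k / β k) * (∑ i, β i * y i ^ 2 - (∑ i, β i * y i) ^ 2) ≤
      ∑ i, α i * y i ^ 2 - (∑ i, α i * y i) ^ 2 ∧
    ∑ i, α i * y i ^ 2 - (∑ i, α i * y i) ^ 2 ≤
      (⨆ k, α k / β k) * (∑ i, β i * y i ^ 2 - (∑ i, β i * y i) ^ 2) := by
  have ratio_nonneg : ∀ k, 0 ≤ α k / β k := fun k => (div_pos (hα k) (hβ k)).le
  refine ⟨mul_weightedVariance_le_of_mul_le y hαs hβs (Real.iInf_nonneg ratio_nonneg)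
      fun i => ?_, weightedVariance_le_mul_of_le_mul y hαs hβs fun i => ?_⟩
  · exact (le_div_iff₀ (hβ i)).1 (ciInf_le (Set.finite_range _).bddBelow i)
  · exact (div_le_iff₀ (hβ i)).1
      (le_ciSup (f := fun k => α k / β k) (Set.finite_range _).bddAbove i)

theorem variance_weight_comparison (n : ℕ) (hn : 1 ≤ n)
    (y α β : Fin n → ℝ)
    (hα : ∀ i, 0 < α i) (hαs : ∑ i, α i = 1)
    (hβ : ∀ i, 0 < β i) (hβs : ∑ i, β i = 1) :
    (⨅ k, α k / β k) * (∑ i, β i * y i ^ 2 - (∑ i, β i * y i) ^ 2) ≤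
      ∑ i, α i * y i ^ 2 - (∑ i, α i * y i) ^ 2 ∧
    ∑ i, α i * y i ^ 2 - (∑ i, α i * y i) ^ 2 ≤
      (⨆ k, α k / β k) * (∑ i, β i * y i ^ 2 - (∑ i, β i * y i) ^ 2) :=
  variance_weight_comparison_general n y α β hα hαs hβ hβs
end

section
/- Let X = (x₁,…,xₙ) with xᵢ ≥ 0, and let α, β be weight vectors with positive entries summing to 1. Then min_k(α_k/β_k)·(E_β X − Π_β X) ≤ E_α X − Π_α X ≤ max_k(α_k/β_k)·(E_β X − Π_β X). -/
open Finset Real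

/-- Key lemma: if `0 ≤ m` and `m * β i ≤ α i` for all `i`, then
`m * (E_β - Π_β) ≤ E_α - Π_α`. -/
lemma gap_ge (n : ℕ) (x α β : Fin n → ℝ) (hx : ∀ i, 0 ≤ x i)
    (hα : ∀ i, 0 < α i) (hαs : ∑ i, α i = 1)
    (hβ : ∀ i, 0 < β i) (hβs : ∑ i, β i = 1)
    (m : ℝ) (hm0 : 0 ≤ m) (hm : ∀ i, m * β i ≤ α i) :
    m * (∑ i, β i * x i - ∏ i, x i ^ β i) ≤ ∑ i, α i * x i - ∏ i, x i ^ α i := by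
  have hm1 : m ≤ 1 := by
    calc m = ∑ i, m * β i := by rw [← Finset.mul_sum, hβs, mul_one]
    _ ≤ ∑ i, α i := Finset.sum_le_sum fun i _ => hm i
    _ = 1 := hαs
  by_cases hzero : ∃ i, x i = 0
  · obtain ⟨i0, hi0⟩ := hzero
    have hA : ∏ i, x i ^ α i = 0 :=
      Finset.prod_eq_zero (Finset.mem_univ i0)
        (by rw [hi0, Real.zero_rpow (hα i0).ne'])
    have hB : ∏ i, x i ^ β i = 0 :=
      Finset.prod_eq_zero (Finset.mem_univ i0)
        (by rw [hi0, Real.zero_rpow (hβ i0).ne'])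
    rw [hA, hB, sub_zero, sub_zero, Finset.mul_sum]
    refine Finset.sum_le_sum fun i _ => ?_
    calc m * (β i * x i) = (m * β i) * x i := by ring
    _ ≤ α i * x i := mul_le_mul_of_nonneg_right (hm i) (hx i)
  · push_neg at hzero
    have hxp : ∀ i, 0 < x i := fun i => (hx i).lt_of_ne' (hzero i)
    have hApos : 0 < ∏ i, x i ^ α i :=
      Finset.prod_pos fun i _ => Real.rpow_pos_of_pos (hxp i) _
    have hBpos : 0 < ∏ i, x i ^ β i :=
      Finset.prod_pos fun i _ => Real.rpow_pos_of_pos (hxp i) _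
    rcases hm1.lt_or_eq with hmlt | hmeq
    · -- m < 1
      set A := ∏ i, x i ^ α i with hAdef
      set B := ∏ i, x i ^ β i with hBdef
      have h1m : (0:ℝ) < 1 - m := by linarith
      set w : Fin n → ℝ := fun i => α i - m * β i with hwdef
      have hw0 : ∀ i, 0 ≤ w i := fun i => by have := hm i; simp [hwdef]; linarith
      have hws : ∑ i, w i = 1 - m := by
        simp only [hwdef, Finset.sum_sub_distrib, ← Finset.mul_sum, hαs, hβs, mul_one]
      -- weighted AM-GM with weights w/(1-m)
      have hgm := Real.geom_mean_le_arith_mean_weighted Finset.univ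
        (fun i => w i / (1 - m)) x
        (fun i _ => div_nonneg (hw0 i) h1m.le)
        (by rw [← Finset.sum_div, hws, div_self h1m.ne'])
        (fun i _ => hx i)
      -- compute the geometric mean
      have hprod : ∏ i, x i ^ (w i / (1 - m)) = (A / B ^ m) ^ (1 - m)⁻¹ := by
        have e1 : ∀ i, x i ^ (w i / (1 - m)) = (x i ^ w i) ^ (1 - m)⁻¹ := fun i => by
          rw [div_eq_mul_inv, Real.rpow_mul (hx i)]
        have e2 : ∏ i, x i ^ w i = A / B ^ m := by
          have : ∀ i, x i ^ w i = x i ^ α i / (x i ^ β i) ^ m := fun i => by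
            rw [hwdef, Real.rpow_sub (hxp i), mul_comm, Real.rpow_mul (hx i)]
          rw [Finset.prod_congr rfl fun i _ => this i, Finset.prod_div_distrib,
            ← Real.finset_prod_rpow _ _ (fun i _ => Real.rpow_nonneg (hx i) _)]
        rw [Finset.prod_congr rfl fun i _ => e1 i,
          Real.finset_prod_rpow _ _ (fun i _ => Real.rpow_nonneg (hx i) _), e2]
      set u : ℝ := (A / B ^ m) ^ (1 - m)⁻¹ with hudef
      have hupos : 0 < u :=
        Real.rpow_pos_of_pos (div_pos hApos (Real.rpow_pos_of_pos hBpos m)) _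
      -- two-variable AM-GM : A = u^(1-m) * B^m ≤ (1-m)u + mB
      have hu1m : u ^ (1 - m) = A / B ^ m := by
        rw [hudef, ← Real.rpow_mul (div_pos hApos (Real.rpow_pos_of_pos hBpos m)).le,
          inv_mul_cancel₀ h1m.ne', Real.rpow_one]
      have h2 : A ≤ (1 - m) * u + m * B := by
        have h2' := Real.geom_mean_le_arith_mean2_weighted h1m.le hm0 hupos.le hBpos.le
          (by ring)
        rwa [hu1m, div_mul_cancel₀ _ (Real.rpow_pos_of_pos hBpos m).ne'] at h2'
      have h1 : (1 - m) * u ≤ ∑ i, w i * x i := by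
        rw [hprod] at hgm
        have hle : u ≤ (∑ i, w i * x i) / (1 - m) := by
          calc u ≤ ∑ i, w i / (1 - m) * x i := hgm
          _ = (∑ i, w i * x i) / (1 - m) := by
            rw [Finset.sum_div]; exact Finset.sum_congr rfl fun i _ => by ring
        have := (le_div_iff₀ h1m).mp hle
        linarith
      have hwx : ∑ i, w i * x i = ∑ i, α i * x i - m * ∑ i, β i * x i := by
        simp only [hwdef, sub_mul, Finset.sum_sub_distrib, Finset.mul_sum, mul_assoc]
      rw [mul_sub]
      linarith
    · -- m = 1 : then α = β
      have hab : ∀ i ∈ Finset.univ, β i = α i := by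
        rw [← Finset.sum_eq_sum_iff_of_le fun i _ => by
          have := hm i; rw [hmeq, one_mul] at this; exact this]
        rw [hαs, hβs]
      have hab' : β = α := funext fun i => hab i (Finset.mem_univ i)
      rw [hmeq, one_mul, hab']

theorem amgm_gap_weight_comparison (n : ℕ) (hn : 1 ≤ n)
    (x α β : Fin n → ℝ) (hx : ∀ i, 0 ≤ x i)
    (hα : ∀ i, 0 < α i) (hαs : ∑ i, α i = 1)
    (hβ : ∀ i, 0 < β i) (hβs : ∑ i, β i = 1) :
    (⨅ k, α k / β k) * (∑ i, β i * x i - ∏ i, x i ^ β i) ≤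
      ∑ i, α i * x i - ∏ i, x i ^ α i ∧
    ∑ i, α i * x i - ∏ i, x i ^ α i ≤
      (⨆ k, α k / β k) * (∑ i, β i * x i - ∏ i, x i ^ β i) := by
  haveI : Nonempty (Fin n) := Fin.pos_iff_nonempty.mp hn
  constructor
  · set m := ⨅ k, α k / β k with hmdef
    have hm0 : 0 ≤ m := le_ciInf fun k => (div_pos (hα k) (hβ k)).le
    have hmle : ∀ k, m ≤ α k / β k := fun k =>
      ciInf_le (Set.Finite.bddBelow (Set.finite_range _)) k
    have hm : ∀ i, m * β i ≤ α i := fun i => (le_div_iff₀ (hβ i)).mp (hmle i)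
    exact gap_ge n x α β hx hα hαs hβ hβs m hm0 hm
  · set M := ⨆ k, α k / β k with hMdef
    obtain ⟨i0⟩ := ‹Nonempty (Fin n)›
    have hMge : ∀ k, α k / β k ≤ M := fun k =>
      le_ciSup (f := fun k => α k / β k) (Set.Finite.bddAbove (Set.finite_range _)) k
    have hMpos : 0 < M := lt_of_lt_of_le (div_pos (hα i0) (hβ i0)) (hMge i0)
    have hm : ∀ i, M⁻¹ * α i ≤ β i := fun i => by
      rw [inv_mul_le_iff₀ hMpos]
      exact (div_le_iff₀ (hβ i)).mp (hMge i)
    have key := gap_ge n x β α hx hβ hβs hα hαs M⁻¹ (inv_nonneg.mpr hMpos.le) hm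
    have := mul_le_mul_of_nonneg_left key hMpos.le
    rwa [← mul_assoc, mul_inv_cancel₀ hMpos.ne', one_mul] at this
end

section
/- Let n ≥ 2, X with xᵢ ≥ 0, and weight vectors α, β with positive entries summing to 1. Then min_k(α_k/β_k) · max{1/(1−α_min), 1/(1−β_min)} · Var_β(X^{1/2}) ≤ E_α X − Π_α X. -/
/-!
Write `y = √x` and `A = Σ αᵢ yᵢ`. For `t ≤ min α`, the matrix `(ααᵀ - t·diag α)/(1 - t)` is a
coupling of `α` with itself whose quadratic form at `y` is `(A² - t Σ αᵢ yᵢ²)/(1 - t)`; weighted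
AM-GM over pairs then gives `Var_α(y) ≤ (1 - α_min)(E_α X - Π_α X)`. With `c = min_k αₖ/βₖ` we have
`cβ ≤ α` pointwise, which yields both `c Var_β(y) ≤ Var_α(y)` and
`c (E_β X - Π_β X) ≤ E_α X - Π_α X`, the latter by AM-GM for the weights `c, α - cβ` on the
values `Π_β X, X`. Combining these gives the bound with each of the two factors in the maximum.
-/

open Finset

section

variable {ι : Type*} [Fintype ι]

noncomputable def amgmGap (w x : ι → ℝ) : ℝ := ∑ i, w i * x i - ∏ i, x i ^ w i

noncomputable def weightedVar (w y : ι → ℝ) : ℝ := ∑ i, w i * y i ^ 2 - (∑ i, w i * y i) ^ 2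

theorem amgmGap_nonneg {w x : ι → ℝ} (hw : ∀ i, 0 ≤ w i) (hws : ∑ i, w i = 1)
    (hx : ∀ i, 0 ≤ x i) : 0 ≤ amgmGap w x :=
  sub_nonneg.2 <| Real.geom_mean_le_arith_mean_weighted univ w x (fun i _ => hw i) hws
    fun i _ => hx i

theorem sum_mul_sub_sq_eq_weightedVar_add {w : ι → ℝ} (hws : ∑ i, w i = 1) (y : ι → ℝ) (m : ℝ) :
    ∑ i, w i * (y i - m) ^ 2 = weightedVar w y + (∑ i, w i * y i - m) ^ 2 := by
  have hexpand : ∀ i, w i * (y i - m) ^ 2 = w i * y i ^ 2 - 2 * m * (w i * y i) + m ^ 2 * w i :=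
    fun i => by ring
  rw [sum_congr rfl fun i _ => hexpand i, sum_add_distrib, sum_sub_distrib, ← mul_sum, ← mul_sum,
    hws, weightedVar]
  ring

theorem weightedVar_nonneg {w : ι → ℝ} (hw : ∀ i, 0 ≤ w i) (hws : ∑ i, w i = 1) (y : ι → ℝ) :
    0 ≤ weightedVar w y := by
  have h := sum_mul_sub_sq_eq_weightedVar_add hws y (∑ i, w i * y i)
  rw [sub_self, sq, mul_zero, add_zero] at h
  exact h ▸ sum_nonneg fun i _ => mul_nonneg (hw i) (sq_nonneg _)

theorem weightedVar_sqrt (w : ι → ℝ) {x : ι → ℝ} (hx : ∀ i, 0 ≤ x i) :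
    weightedVar w (fun i => √(x i)) = ∑ i, w i * x i - (∑ i, w i * √(x i)) ^ 2 := by
  simp only [weightedVar, Real.sq_sqrt (hx _)]

theorem mul_weightedVar_le {α β : ι → ℝ} {c : ℝ} (hc : 0 ≤ c) (hcβ : ∀ i, c * β i ≤ α i)
    (hαs : ∑ i, α i = 1) (hβs : ∑ i, β i = 1) (y : ι → ℝ) :
    c * weightedVar β y ≤ weightedVar α y := by
  set A := ∑ i, α i * y i
  have hα := sum_mul_sub_sq_eq_weightedVar_add hαs y A
  have hβ := sum_mul_sub_sq_eq_weightedVar_add hβs y A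
  have hsum : c * ∑ i, β i * (y i - A) ^ 2 ≤ ∑ i, α i * (y i - A) ^ 2 := by
    rw [mul_sum]
    refine sum_le_sum fun i _ => ?_
    rw [← mul_assoc]
    exact mul_le_mul_of_nonneg_right (hcβ i) (sq_nonneg _)
  rw [sub_self, sq, mul_zero, add_zero] at hα
  nlinarith [mul_nonneg hc (sq_nonneg (∑ i, β i * y i - A))]

theorem mul_amgmGap_le {α β x : ι → ℝ} {c : ℝ} (hc : 0 ≤ c) (hcβ : ∀ i, c * β i ≤ α i)
    (hβ : ∀ i, 0 ≤ β i) (hαs : ∑ i, α i = 1) (hβs : ∑ i, β i = 1) (hx : ∀ i, 0 ≤ x i) :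
    c * amgmGap β x ≤ amgmGap α x := by
  set Q := ∏ i, x i ^ β i
  have hQ : 0 ≤ Q := prod_nonneg fun i _ => Real.rpow_nonneg (hx i) _
  have hgap := amgmGap_nonneg (w := fun o : Option ι => o.elim c fun i => α i - c * β i)
    (x := fun o => o.elim Q x) (fun o => o.rec hc fun i => sub_nonneg.2 (hcβ i))
    (by rw [Fintype.sum_option]; simp only [Option.elim, sum_sub_distrib, ← mul_sum, hαs, hβs]; ring)
    (fun o => o.rec hQ hx)
  have hprod : Q ^ c * ∏ i, x i ^ (α i - c * β i) = ∏ i, x i ^ α i := by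
    rw [← Real.finsetProd_rpow _ _ fun i _ => Real.rpow_nonneg (hx i) _, ← prod_mul_distrib]
    refine prod_congr rfl fun i _ => ?_
    rw [← Real.rpow_mul (hx i), ← Real.rpow_add_of_nonneg (hx i)
      (mul_nonneg (hβ i) hc) (sub_nonneg.2 (hcβ i))]
    ring_nf
  simp only [amgmGap, Fintype.sum_option, Fintype.prod_option, Option.elim, sub_mul,
    sum_sub_distrib, hprod] at hgap ⊢
  rw [mul_sub, mul_sum]
  simp only [mul_assoc] at hgap
  linarith

theorem prod_rpow_mul_prod_rpow_le_sum_coupling {α γ y : ι → ℝ} {W : ι → ι → ℝ}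
    (hW : ∀ i j, 0 ≤ W i j) (hrow : ∀ i, ∑ j, W i j = α i) (hcol : ∀ j, ∑ i, W i j = γ j)
    (hαs : ∑ i, α i = 1) (hy : ∀ i, 0 ≤ y i) :
    (∏ i, y i ^ α i) * ∏ j, y j ^ γ j ≤ ∑ i, ∑ j, W i j * (y i * y j) := by
  have amgm := Real.geom_mean_le_arith_mean_weighted univ (fun p : ι × ι => W p.1 p.2)
    (fun p => y p.1 * y p.2) (fun p _ => hW p.1 p.2)
    (by rw [Fintype.sum_prod_type' W]; simp only [hrow, hαs])
    (fun p _ => mul_nonneg (hy p.1) (hy p.2))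
  rw [Fintype.prod_prod_type' fun i j => (y i * y j) ^ W i j,
    Fintype.sum_prod_type' fun i j => W i j * (y i * y j)] at amgm
  simp_rw [Real.mul_rpow (hy _) (hy _), prod_mul_distrib] at amgm
  rw [prod_comm (f := fun i j => y j ^ W i j)] at amgm
  simpa only [← Real.rpow_sum_of_nonneg (hy _) fun _ _ => hW _ _, hrow, hcol] using amgm

theorem iInf_le_one_of_sum_eq_one {w : ι → ℝ} (hw : ∀ i, 0 ≤ w i) (hws : ∑ i, w i = 1) :
    ⨅ i, w i ≤ 1 := by
  obtain ⟨i, -⟩ := nonempty_of_sum_ne_zero (hws ▸ one_ne_zero : ∑ i, w i ≠ 0)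
  exact (ciInf_le (Finite.bddBelow_range w) i).trans
    (hws ▸ single_le_sum (fun j _ => hw j) (mem_univ i))

end

section

variable {ι : Type*} [DecidableEq ι]

noncomputable def shiftedCoupling (α : ι → ℝ) (t : ℝ) (i j : ι) : ℝ :=
  α i * (α j - if i = j then t else 0) / (1 - t)

theorem shiftedCoupling_nonneg {α : ι → ℝ} {t : ℝ} (hα : ∀ i, 0 ≤ α i) (ht : ∀ i, t ≤ α i)
    (ht1 : t < 1) (i j : ι) : 0 ≤ shiftedCoupling α t i j := by
  refine div_nonneg (mul_nonneg (hα i) ?_) (sub_pos.2 ht1).le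
  split_ifs with h
  · exact sub_nonneg.2 (h ▸ ht i)
  · simpa using hα j

variable [Fintype ι]

theorem sum_shiftedCoupling_right {α : ι → ℝ} {t : ℝ} (hαs : ∑ i, α i = 1) (ht1 : t ≠ 1)
    (i : ι) : ∑ j, shiftedCoupling α t i j = α i := by
  have : 1 - t ≠ 0 := sub_ne_zero.2 ht1.symm
  simp only [shiftedCoupling, ← sum_div, ← mul_sum, sum_sub_distrib, hαs, sum_ite_eq, mem_univ,
    if_true]
  field_simp

theorem sum_shiftedCoupling_left {α : ι → ℝ} {t : ℝ} (hαs : ∑ i, α i = 1) (ht1 : t ≠ 1)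
    (j : ι) : ∑ i, shiftedCoupling α t i j = α j := by
  have : 1 - t ≠ 0 := sub_ne_zero.2 ht1.symm
  simp only [shiftedCoupling, ← sum_div, ← sum_mul, mul_sub, sum_sub_distrib, hαs, mul_ite,
    mul_zero, sum_ite_eq', mem_univ, if_true]
  field_simp

theorem sum_shiftedCoupling_mul (α : ι → ℝ) (t : ℝ) (y : ι → ℝ) :
    ∑ i, ∑ j, shiftedCoupling α t i j * (y i * y j) =
      ((∑ i, α i * y i) ^ 2 - t * ∑ i, α i * y i ^ 2) / (1 - t) := by
  have hrow : ∀ i, ∑ j, shiftedCoupling α t i j * (y i * y j) =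
      α i * y i * (∑ j, α j * y j - t * y i) / (1 - t) := by
    intro i
    have hterm : ∀ j, shiftedCoupling α t i j * (y i * y j) =
        (α i * y i * (α j * y j) - if i = j then α i * t * y i * y j else 0) / (1 - t) := by
      intro j
      split_ifs with h <;> simp only [shiftedCoupling, h, if_true, if_false] <;> ring
    rw [sum_congr rfl fun j _ => hterm j, ← sum_div, sum_sub_distrib, ← mul_sum, sum_ite_eq]
    simp only [mem_univ, if_true]
    ring
  rw [sum_congr rfl fun i _ => hrow i, ← sum_div, sq, sum_mul,
    mul_sum univ (fun i => α i * y i ^ 2) t, ← sum_sub_distrib]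
  exact congrArg (· / (1 - t)) (sum_congr rfl fun i _ => by ring)

theorem weightedVar_le_one_sub_mul_amgmGap {α y : ι → ℝ} {t : ℝ} (hα : ∀ i, 0 ≤ α i)
    (hαs : ∑ i, α i = 1) (hy : ∀ i, 0 ≤ y i) (ht : ∀ i, t ≤ α i) (ht1 : t < 1) :
    weightedVar α y ≤ (1 - t) * amgmGap α (fun i => y i ^ 2) := by
  have key := prod_rpow_mul_prod_rpow_le_sum_coupling (shiftedCoupling_nonneg hα ht ht1)
    (sum_shiftedCoupling_right hαs ht1.ne) (sum_shiftedCoupling_left hαs ht1.ne) hαs hy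
  rw [sum_shiftedCoupling_mul, le_div_iff₀ (sub_pos.2 ht1), ← prod_mul_distrib] at key
  have hsq : ∏ i, (y i ^ 2) ^ α i = ∏ i, y i ^ α i * y i ^ α i :=
    prod_congr rfl fun i _ => by rw [sq, Real.mul_rpow (hy i) (hy i)]
  rw [weightedVar, amgmGap, hsq]
  linarith

/-- For `t ≥ 1` the factor `(1 - t)⁻¹` is nonpositive (`0` at `t = 1`), so the bound is then
AM-GM. -/
theorem inv_one_sub_mul_weightedVar_sqrt_le_amgmGap {α x : ι → ℝ} {t : ℝ}
    (hα : ∀ i, 0 ≤ α i) (hαs : ∑ i, α i = 1) (hx : ∀ i, 0 ≤ x i) (ht : ∀ i, t ≤ α i) :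
    (1 - t)⁻¹ * weightedVar α (fun i => √(x i)) ≤ amgmGap α x := by
  rcases lt_or_ge t 1 with ht1 | ht1
  · rw [inv_mul_le_iff₀ (sub_pos.2 ht1)]
    have h := weightedVar_le_one_sub_mul_amgmGap hα hαs (fun i => Real.sqrt_nonneg (x i)) ht ht1
    simpa only [Real.sq_sqrt (hx _)] using h
  · exact (mul_nonpos_of_nonpos_of_nonneg (inv_nonpos.2 (sub_nonpos.2 ht1))
      (weightedVar_nonneg hα hαs _)).trans (amgmGap_nonneg hα hαs hx)

end

theorem amgm_gap_mixed_lower_bound_general (n : ℕ)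
    (x α β : Fin n → ℝ) (hx : ∀ i, 0 ≤ x i)
    (hα : ∀ i, 0 < α i) (hαs : ∑ i, α i = 1)
    (hβ : ∀ i, 0 < β i) (hβs : ∑ i, β i = 1) :
    (⨅ k, α k / β k) * max (1 / (1 - ⨅ i, α i)) (1 / (1 - ⨅ i, β i)) *
        (∑ i, β i * x i - (∑ i, β i * Real.sqrt (x i)) ^ 2) ≤
      ∑ i, α i * x i - ∏ i, x i ^ α i := by
  have hα0 : ∀ i, 0 ≤ α i := fun i => (hα i).le
  have hβ0 : ∀ i, 0 ≤ β i := fun i => (hβ i).le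
  set c := ⨅ k, α k / β k
  have hc : 0 ≤ c := Real.iInf_nonneg fun k => div_nonneg (hα0 k) (hβ0 k)
  have hcβ : ∀ i, c * β i ≤ α i := fun i =>
    (le_div_iff₀ (hβ i)).1 (ciInf_le (Finite.bddBelow_range _) i)
  set V := weightedVar β fun i => √(x i)
  rw [← weightedVar_sqrt β hx, mul_max_of_nonneg _ _ hc,
    max_mul_of_nonneg _ _ (weightedVar_nonneg hβ0 hβs _), max_le_iff, one_div, one_div]
  constructor
  · calc c * (1 - ⨅ i, α i)⁻¹ * V = (1 - ⨅ i, α i)⁻¹ * (c * V) := by ring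
      _ ≤ (1 - ⨅ i, α i)⁻¹ * weightedVar α fun i => √(x i) :=
        mul_le_mul_of_nonneg_left (mul_weightedVar_le hc hcβ hαs hβs _)
          (inv_nonneg.2 (sub_nonneg.2 (iInf_le_one_of_sum_eq_one hα0 hαs)))
      _ ≤ amgmGap α x := inv_one_sub_mul_weightedVar_sqrt_le_amgmGap hα0 hαs hx
        fun i => ciInf_le (Finite.bddBelow_range α) i
  · calc c * (1 - ⨅ i, β i)⁻¹ * V = c * ((1 - ⨅ i, β i)⁻¹ * V) := by ring
      _ ≤ c * amgmGap β x := mul_le_mul_of_nonneg_left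
        (inv_one_sub_mul_weightedVar_sqrt_le_amgmGap hβ0 hβs hx
          fun i => ciInf_le (Finite.bddBelow_range β) i) hc
      _ ≤ amgmGap α x := mul_amgmGap_le hc hcβ hβ0 hαs hβs hx

theorem amgm_gap_mixed_lower_bound (n : ℕ) (hn : 2 ≤ n)
    (x α β : Fin n → ℝ) (hx : ∀ i, 0 ≤ x i)
    (hα : ∀ i, 0 < α i) (hαs : ∑ i, α i = 1)
    (hβ : ∀ i, 0 < β i) (hβs : ∑ i, β i = 1) :
    (⨅ k, α k / β k) * max (1 / (1 - ⨅ i, α i)) (1 / (1 - ⨅ i, β i)) *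
        (∑ i, β i * x i - (∑ i, β i * Real.sqrt (x i)) ^ 2) ≤
      ∑ i, α i * x i - ∏ i, x i ^ α i :=
  amgm_gap_mixed_lower_bound_general n x α β hx hα hαs hβ hβs
end

section
/- Let (Ω, μ) be a measure space, p₁,…,pₙ ∈ (1,∞) with Σ 1/pᵢ = 1, and fᵢ ∈ L^{pᵢ} nonnegative with ‖fᵢ‖_{pᵢ} > 0. Then ‖Π fᵢ‖₁ ≤ (Π ‖fᵢ‖_{pᵢ}) · (1 − (p_max/(p_max−1)) · Σᵢ (1/pᵢ) ‖ fᵢ^{pᵢ/2}/‖fᵢ‖_{pᵢ}^{pᵢ/2} − Σ_k (1/p_k) f_k^{p_k/2}/‖f_k‖_{p_k}^{p_k/2} ‖₂²). -/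
/-!
Put `αᵢ = 1/pᵢ`, `β = min αᵢ = 1/p_max` and `yᵢ = fᵢ^{pᵢ/2} / ‖fᵢ‖^{pᵢ/2}`, so that `∫ yᵢ² = 1`
and `∏ fᵢ / ∏ ‖fᵢ‖ = ∏ yᵢ^{2αᵢ}`. Pointwise,
`(∑ αᵢ yᵢ)² - β ∑ αᵢ yᵢ² = (1 - β) ∑_{i,j} wᵢⱼ yᵢ yⱼ` with `wᵢⱼ = (αᵢ αⱼ - β αᵢ δᵢⱼ) / (1 - β)`;
these weights are nonnegative because `β ≤ αᵢ`, and both their marginals are `α`. Weighted AM-GM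
over the pairs `(i, j)` bounds the right side below by `(1 - β) ∏ yᵢ^{2αᵢ}`, which, written with the
`α`-variance of `y`, is `∏ yᵢ^{2αᵢ} ≤ ∑ αᵢ yᵢ² - (1 - β)⁻¹ Var_α y`. Integrating gives the theorem.
-/

open Finset

section PairWeight

variable {ι : Type*} [DecidableEq ι] {α y : ι → ℝ} {β : ℝ}

noncomputable def pairWeight (α : ι → ℝ) (β : ℝ) (ij : ι × ι) : ℝ :=
  (α ij.1 * α ij.2 - if ij.1 = ij.2 then β * α ij.1 else 0) / (1 - β)

lemma pairWeight_swap (i j : ι) : pairWeight α β (j, i) = pairWeight α β (i, j) := by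
  by_cases h : i = j
  · subst h; rfl
  · simp [pairWeight, h, Ne.symm h, mul_comm]

lemma pairWeight_nonneg (hβ0 : 0 ≤ β) (hβ1 : β < 1) (hαβ : ∀ i, β ≤ α i) (ij : ι × ι) :
    0 ≤ pairWeight α β ij := by
  obtain ⟨i, j⟩ := ij
  refine div_nonneg ?_ (by linarith)
  by_cases h : i = j
  · subst h
    simp only [if_true]
    nlinarith [hαβ i]
  · simp only [h, if_false, sub_zero]
    exact mul_nonneg (hβ0.trans (hαβ i)) (hβ0.trans (hαβ j))

variable [Fintype ι]

lemma sum_pairWeight_left (hβ1 : β ≠ 1) (hs : ∑ i, α i = 1) (i : ι) :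
    ∑ j, pairWeight α β (i, j) = α i := by
  have hβ : 1 - β ≠ 0 := sub_ne_zero.mpr hβ1.symm
  simp only [pairWeight, ← sum_div, sum_sub_distrib, ← mul_sum, hs,
    sum_ite_eq, mem_univ, if_true]
  field_simp

lemma sum_pairWeight_right (hβ1 : β ≠ 1) (hs : ∑ i, α i = 1) (j : ι) :
    ∑ i, pairWeight α β (i, j) = α j := by
  rw [← sum_pairWeight_left hβ1 hs j]
  exact sum_congr rfl fun i _ => (pairWeight_swap i j).symm

lemma prod_rpow_pairWeight (hβ1 : β ≠ 1) (hs : ∑ i, α i = 1) (hα : ∀ i, 0 ≤ α i)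
    (hw : ∀ ij, 0 ≤ pairWeight α β ij) (hy : ∀ i, 0 ≤ y i) :
    ∏ ij : ι × ι, (y ij.1 * y ij.2) ^ pairWeight α β ij = ∏ i, y i ^ (2 * α i) := by
  have hrow : ∏ ij : ι × ι, y ij.1 ^ pairWeight α β ij = ∏ i, y i ^ α i := by
    rw [Fintype.prod_prod_type]
    refine prod_congr rfl fun i _ => ?_
    rw [← Real.rpow_sum_of_nonneg (hy i) fun j _ => hw (i, j), sum_pairWeight_left hβ1 hs]
  have hcol : ∏ ij : ι × ι, y ij.2 ^ pairWeight α β ij = ∏ i, y i ^ α i := by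
    rw [Fintype.prod_prod_type_right]
    refine prod_congr rfl fun j _ => ?_
    rw [← Real.rpow_sum_of_nonneg (hy j) fun i _ => hw (i, j), sum_pairWeight_right hβ1 hs]
  simp only [Real.mul_rpow (hy _) (hy _)]
  rw [prod_mul_distrib, hrow, hcol, ← prod_mul_distrib]
  refine prod_congr rfl fun i _ => ?_
  rw [← Real.rpow_add_of_nonneg (hy i) (hα i) (hα i), two_mul]

lemma sum_pairWeight_mul (hβ1 : β ≠ 1) :
    (1 - β) * ∑ ij : ι × ι, pairWeight α β ij * (y ij.1 * y ij.2) =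
      (∑ i, α i * y i) ^ 2 - β * ∑ i, α i * y i ^ 2 := by
  have hβ : 1 - β ≠ 0 := sub_ne_zero.mpr hβ1.symm
  simp only [pairWeight, mul_sum, Fintype.sum_prod_type, sq]
  simp only [← mul_sum, div_mul_eq_mul_div, mul_div_cancel₀ _ hβ, sub_mul, ite_mul, zero_mul,
    sum_sub_distrib, sum_ite_eq, mem_univ, if_true]
  rw [sum_mul_sum, mul_sum]
  congr 1
  · exact sum_congr rfl fun i _ => sum_congr rfl fun j _ => by ring
  · exact sum_congr rfl fun i _ => by ring

end PairWeight

section Pointwise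

variable {ι : Type*} [Fintype ι] {α y : ι → ℝ} {β : ℝ}

theorem add_prod_rpow_le_sq_sum_mul (hβ0 : 0 ≤ β) (hβ1 : β < 1) (hαβ : ∀ i, β ≤ α i)
    (hs : ∑ i, α i = 1) (hy : ∀ i, 0 ≤ y i) :
    β * ∑ i, α i * y i ^ 2 + (1 - β) * ∏ i, y i ^ (2 * α i) ≤ (∑ i, α i * y i) ^ 2 := by
  classical
  have hw := pairWeight_nonneg hβ0 hβ1 hαβ
  have hw1 : ∑ ij : ι × ι, pairWeight α β ij = 1 := by
    rw [Fintype.sum_prod_type]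
    simp only [sum_pairWeight_left hβ1.ne hs, hs]
  have amgm := Real.geom_mean_le_arith_mean_weighted univ (pairWeight α β)
    (fun ij => y ij.1 * y ij.2) (fun ij _ => hw ij) hw1 (fun ij _ => mul_nonneg (hy _) (hy _))
  rw [prod_rpow_pairWeight hβ1.ne hs (fun i => hβ0.trans (hαβ i)) hw hy] at amgm
  have := mul_le_mul_of_nonneg_left amgm (sub_nonneg.mpr hβ1.le)
  rw [sum_pairWeight_mul hβ1.ne] at this
  linarith

lemma sum_mul_sub_sum_mul_sq (hs : ∑ i, α i = 1) :
    ∑ i, α i * (y i - ∑ k, α k * y k) ^ 2 = ∑ i, α i * y i ^ 2 - (∑ i, α i * y i) ^ 2 := by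
  set m := ∑ k, α k * y k
  have h : ∀ i, α i * (y i - m) ^ 2 = α i * y i ^ 2 - 2 * m * (α i * y i) + m ^ 2 * α i :=
    fun i => by ring
  simp only [h, sum_add_distrib, sum_sub_distrib, ← mul_sum, hs]
  ring

theorem geom_mean_le_arith_mean_sub_variance (hβ0 : 0 ≤ β) (hβ1 : β < 1) (hαβ : ∀ i, β ≤ α i)
    (hs : ∑ i, α i = 1) (hy : ∀ i, 0 ≤ y i) :
    ∏ i, y i ^ (2 * α i) ≤
      ∑ i, α i * y i ^ 2 - (1 - β)⁻¹ * ∑ i, α i * (y i - ∑ k, α k * y k) ^ 2 := by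
  have hβ : 0 < 1 - β := sub_pos.mpr hβ1
  rw [sum_mul_sub_sum_mul_sq hs, ← mul_le_mul_iff_of_pos_left hβ, mul_sub,
    ← mul_assoc, mul_inv_cancel₀ hβ.ne', one_mul]
  linarith [add_prod_rpow_le_sq_sum_mul hβ0 hβ1 hαβ hs hy]

end Pointwise

section Integral

open MeasureTheory

variable {Ω : Type*} [MeasurableSpace Ω] {μ : Measure Ω}

lemma rpow_div_two_sq {x : ℝ} (hx : 0 ≤ x) (r : ℝ) : (x ^ (r / 2)) ^ 2 = x ^ r := by
  rw [← Real.rpow_mul_natCast hx]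
  norm_num

lemma memLp_two_rpow_div_two_div {f : Ω → ℝ} {p : ℝ} (hf0 : ∀ u, 0 ≤ f u)
    (hf : Integrable (fun u => f u ^ p) μ) (c : ℝ) :
    MemLp (fun u => f u ^ (p / 2) / c) 2 μ := by
  have hmeas : AEStronglyMeasurable (fun u => f u ^ (p / 2) / c) μ := by
    have h := ((Real.continuous_rpow_const (by norm_num : (0 : ℝ) ≤ 1 / 2)).div_const c
      ).comp_aestronglyMeasurable hf.1
    refine h.congr (ae_of_all _ fun u => ?_)
    simp only [← Real.rpow_mul (hf0 u), mul_one_div]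
  rw [memLp_two_iff_integrable_sq hmeas]
  simpa only [div_pow, rpow_div_two_sq (hf0 _)] using hf.div_const (c ^ 2)

lemma rpow_div_two_div_rpow_div_two_rpow {x N p : ℝ} (hx : 0 ≤ x) (hN : 0 ≤ N) (hp : p ≠ 0) :
    (x ^ (p / 2) / N ^ (p / 2)) ^ (2 * (1 / p)) = x / N := by
  have h : p / 2 * (2 * (1 / p)) = 1 := by field_simp
  rw [Real.div_rpow (Real.rpow_nonneg hx _) (Real.rpow_nonneg hN _), ← Real.rpow_mul hx,
    ← Real.rpow_mul hN, h, Real.rpow_one, Real.rpow_one]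

lemma integral_sq_rpow_div_two_div_eq_one {f : Ω → ℝ} {p N : ℝ} (hp : p ≠ 0)
    (hf0 : ∀ u, 0 ≤ f u) (hN : N = (∫ u, f u ^ p ∂μ) ^ (1 / p)) (hNpos : 0 < N) :
    ∫ u, (f u ^ (p / 2) / N ^ (p / 2)) ^ 2 ∂μ = 1 := by
  have hI0 : 0 ≤ ∫ u, f u ^ p ∂μ := integral_nonneg fun u => Real.rpow_nonneg (hf0 u) p
  have hNp : N ^ p = ∫ u, f u ^ p ∂μ := by rw [hN, one_div, Real.rpow_inv_rpow hI0 hp]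
  simp only [div_pow, rpow_div_two_sq (hf0 _), rpow_div_two_sq hNpos.le, integral_div, hNp]
  exact div_self (hNp ▸ (Real.rpow_pos_of_pos hNpos p).ne')

variable {ι : Type*} [Fintype ι] {α : ι → ℝ} {β : ℝ} {Y : ι → Ω → ℝ}

theorem integral_prod_rpow_le_one_sub_variance (hβ0 : 0 ≤ β) (hβ1 : β < 1)
    (hαβ : ∀ i, β ≤ α i) (hs : ∑ i, α i = 1) (hY : ∀ i, MemLp (Y i) 2 μ)
    (hY0 : ∀ i u, 0 ≤ Y i u) (hY1 : ∀ i, ∫ u, Y i u ^ 2 ∂μ = 1) :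
    ∫ u, ∏ i, Y i u ^ (2 * α i) ∂μ ≤
      1 - (1 - β)⁻¹ * ∑ i, α i * ∫ u, (Y i u - ∑ k, α k * Y k u) ^ 2 ∂μ := by
  have hα : ∀ i, 0 ≤ α i := fun i => hβ0.trans (hαβ i)
  have hmean : MemLp (fun u => ∑ k, α k * Y k u) 2 μ :=
    memLp_finsetSum _ fun k _ => (hY k).const_mul (α k)
  have hsq : Integrable (fun u => ∑ i, α i * Y i u ^ 2) μ :=
    integrable_finsetSum _ fun i _ => (hY i).integrable_sq.const_mul (α i)
  have hdev (i : ι) : Integrable (fun u => (Y i u - ∑ k, α k * Y k u) ^ 2) μ :=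
    ((hY i).sub hmean).integrable_sq
  have hvar : Integrable (fun u => ∑ i, α i * (Y i u - ∑ k, α k * Y k u) ^ 2) μ :=
    integrable_finsetSum _ fun i _ => (hdev i).const_mul (α i)
  have hpt (u : Ω) := geom_mean_le_arith_mean_sub_variance hβ0 hβ1 hαβ hs fun i => hY0 i u
  have hgeom : Integrable (fun u => ∏ i, Y i u ^ (2 * α i)) μ := by
    refine hsq.mono' ?_ (ae_of_all _ fun u => ?_)
    · exact Finset.aestronglyMeasurable_fun_prod _ fun i _ =>
        (Real.continuous_rpow_const (by linarith [hα i])).comp_aestronglyMeasurable (hY i).1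
    · rw [Real.norm_of_nonneg (prod_nonneg fun i _ => Real.rpow_nonneg (hY0 i u) _)]
      refine (hpt u).trans (sub_le_self _ (mul_nonneg (inv_nonneg.mpr (by linarith)) ?_))
      exact sum_nonneg fun i _ => mul_nonneg (hα i) (sq_nonneg _)
  calc ∫ u, ∏ i, Y i u ^ (2 * α i) ∂μ
      ≤ ∫ u, (∑ i, α i * Y i u ^ 2 -
          (1 - β)⁻¹ * ∑ i, α i * (Y i u - ∑ k, α k * Y k u) ^ 2) ∂μ :=
        integral_mono hgeom (hsq.sub (hvar.const_mul _)) hpt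
    _ = 1 - (1 - β)⁻¹ * ∑ i, α i * ∫ u, (Y i u - ∑ k, α k * Y k u) ^ 2 ∂μ := by
        rw [integral_sub hsq (hvar.const_mul _), integral_const_mul,
          integral_finsetSum _ fun i _ => (hY i).integrable_sq.const_mul (α i),
          integral_finsetSum _ fun i _ => (hdev i).const_mul (α i)]
        simp only [integral_const_mul, hY1, mul_one, hs]

end Integral

open MeasureTheory in
theorem refined_holder_upper_general {Ω : Type*} [MeasurableSpace Ω] (μ : Measure Ω)
    (n : ℕ) (p : Fin n → ℝ) (hp : ∀ i, 1 < p i)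
    (hps : ∑ i, 1 / p i = 1)
    (f : Fin n → Ω → ℝ)
    (hnonneg : ∀ i, ∀ u, 0 ≤ f i u)
    (hint : ∀ i, Integrable (fun u => f i u ^ p i) μ)
    (N : Fin n → ℝ) (hN : ∀ i, N i = (∫ u, f i u ^ p i ∂μ) ^ (1 / p i))
    (hNpos : ∀ i, 0 < N i) :
    ∫ u, ∏ i, f i u ∂μ ≤
      (∏ i, N i) *
        (1 - ((⨆ i, p i) / ((⨆ i, p i) - 1)) *
          ∑ i, (1 / p i) *
            ∫ u, (f i u ^ (p i / 2) / N i ^ (p i / 2) -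
              ∑ k, (1 / p k) * (f k u ^ (p k / 2) / N k ^ (p k / 2))) ^ 2 ∂μ) := by
  have hp0 (i : Fin n) : 0 < p i := one_pos.trans (hp i)
  -- `hps` makes `Fin n` nonempty, so `⨆ i, p i` is a true maximum
  obtain ⟨i₀, -, -⟩ := exists_ne_zero_of_sum_ne_zero (hps ▸ one_ne_zero)
  set q := ⨆ i, p i
  have hpq (i : Fin n) : p i ≤ q := le_ciSup (Finite.bddAbove_range p) i
  have hq : 1 < q := (hp i₀).trans_le (hpq i₀)
  have hc : q / (q - 1) = (1 - q⁻¹)⁻¹ := by field_simp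
  set Y : Fin n → Ω → ℝ := fun i u => f i u ^ (p i / 2) / N i ^ (p i / 2)
  have hprod (u : Ω) : ∏ i, f i u = (∏ i, N i) * ∏ i, Y i u ^ (2 * (1 / p i)) := by
    simp only [Y, rpow_div_two_div_rpow_div_two_rpow (hnonneg _ u) (hNpos _).le (hp0 _).ne',
      prod_div_distrib]
    rw [mul_div_cancel₀ _ (prod_pos fun i _ => hNpos i).ne']
  have key := integral_prod_rpow_le_one_sub_variance (μ := μ) (Y := Y) (α := fun i => 1 / p i)
    (inv_nonneg.mpr (by linarith)) (inv_lt_one_of_one_lt₀ hq)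
    (fun i => by simpa only [one_div] using inv_anti₀ (hp0 i) (hpq i)) hps
    (fun i => memLp_two_rpow_div_two_div (hnonneg i) (hint i) _)
    (fun i u => div_nonneg (Real.rpow_nonneg (hnonneg i u) _) (Real.rpow_nonneg (hNpos i).le _))
    (fun i => integral_sq_rpow_div_two_div_eq_one (hp0 i).ne' (hnonneg i) (hN i) (hNpos i))
  rw [hc]
  calc ∫ u, ∏ i, f i u ∂μ = (∏ i, N i) * ∫ u, ∏ i, Y i u ^ (2 * (1 / p i)) ∂μ := by
        simp only [hprod, integral_const_mul]
    _ ≤ _ := mul_le_mul_of_nonneg_left key (prod_nonneg fun i _ => (hNpos i).le)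

open MeasureTheory in
theorem refined_holder_upper {Ω : Type*} [MeasurableSpace Ω] (μ : Measure Ω)
    (n : ℕ) (hn : 1 ≤ n) (p : Fin n → ℝ) (hp : ∀ i, 1 < p i)
    (hps : ∑ i, 1 / p i = 1)
    (f : Fin n → Ω → ℝ) (hmeas : ∀ i, Measurable (f i))
    (hnonneg : ∀ i, ∀ u, 0 ≤ f i u)
    (hint : ∀ i, Integrable (fun u => f i u ^ p i) μ)
    (N : Fin n → ℝ) (hN : ∀ i, N i = (∫ u, f i u ^ p i ∂μ) ^ (1 / p i))
    (hNpos : ∀ i, 0 < N i) :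
    ∫ u, ∏ i, f i u ∂μ ≤
      (∏ i, N i) *
        (1 - ((⨆ i, p i) / ((⨆ i, p i) - 1)) *
          ∑ i, (1 / p i) *
            ∫ u, (f i u ^ (p i / 2) / N i ^ (p i / 2) -
              ∑ k, (1 / p k) * (f k u ^ (p k / 2) / N k ^ (p k / 2))) ^ 2 ∂μ) :=
  refined_holder_upper_general μ n p hp hps f hnonneg hint N hN hNpos
end

section
/- Let (Ω, μ) be a measure space, p₁,…,pₙ ∈ (1,∞) with Σ 1/pᵢ = 1, and fᵢ ∈ L^{pᵢ} nonnegative with ‖fᵢ‖_{pᵢ} > 0. Then (Π ‖fᵢ‖_{pᵢ}) · max{0, 1 − p_max · Σᵢ (1/pᵢ) ‖ fᵢ^{pᵢ/2}/‖fᵢ‖_{pᵢ}^{pᵢ/2} − Σ_k (1/p_k) f_k^{p_k/2}/‖f_k‖_{p_k}^{p_k/2} ‖₂² } ≤ ‖Π fᵢ‖₁. -/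
/-!
With `αᵢ = 1 / pᵢ` and `gᵢ = fᵢ ^ (pᵢ / 2) / Nᵢ ^ (pᵢ / 2)` we have `∫ gᵢ² = 1` and
`∏ (gᵢ²) ^ αᵢ = ∏ fᵢ / ∏ Nᵢ`, so it suffices to integrate the pointwise refinement of the weighted
AM-GM inequality
  `∑ αᵢ tᵢ² - C ∑ αᵢ (tᵢ - ∑ αₖ tₖ)² ≤ ∏ (tᵢ²) ^ αᵢ`  whenever `1 ≤ C αᵢ` for all `i`.
This is proved by induction on the number of points, merging one point `t` of weight `a` with the
remaining points (weight `b = 1 - a`, normalized mean `h`). For two points it is a three-term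
weighted AM-GM. In the induction step the remaining points have squared geometric mean `σ` possibly
below `h²`, but by the induction hypothesis only by `C b - 1` times their variance; this loss is
absorbed because the two-point bound, a concave quadratic in `t`, never exceeds
`(C - 1) b h² / (C b - 1)`.
-/

open Real Finset MeasureTheory

theorem mul_rpow_mul_rpow_eq_mul_sqrt_mul_sqrt {K x y a b w₁ w₂ w₃ : ℝ} (hK : 0 < K)
    (hx : 0 ≤ x) (hy : 0 ≤ y) (hw : w₁ + w₂ + w₃ = 1) (hxw : a * w₁ + w₂ = 1 / 2)
    (hyw : b * w₁ + w₃ = 1 / 2) :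
    (K * (x ^ a * y ^ b)) ^ w₁ * (K * x) ^ w₂ * (K * y) ^ w₃ = K * (√x * √y) := by
  rw [mul_rpow hK.le (by positivity), mul_rpow (by positivity) (by positivity),
    mul_rpow hK.le hx, mul_rpow hK.le hy, ← rpow_mul hx, ← rpow_mul hy]
  calc K ^ w₁ * (x ^ (a * w₁) * y ^ (b * w₁)) * (K ^ w₂ * x ^ w₂) * (K ^ w₃ * y ^ w₃)
      = K ^ (w₁ + w₂ + w₃) * (x ^ (a * w₁ + w₂) * y ^ (b * w₁ + w₃)) := by
        rw [rpow_add hK, rpow_add hK, rpow_add' hx (by rw [hxw]; norm_num),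
          rpow_add' hy (by rw [hyw]; norm_num)]
        ring
    _ = K * (√x * √y) := by rw [hw, hxw, hyw, rpow_one, sqrt_eq_rpow, sqrt_eq_rpow]

theorem two_point_sub_mul_variance_le {a b C t h : ℝ} (hab : a + b = 1) (ha : 0 < a)
    (hb : 0 < b) (hCa : 1 ≤ C * a) (hCb : 1 ≤ C * b) (ht : 0 ≤ t) (hh : 0 ≤ h) :
    a * t ^ 2 + b * h ^ 2 - C * (a * b * (t - h) ^ 2) ≤ (t ^ 2) ^ a * (h ^ 2) ^ b := by
  obtain ⟨K, hK_def⟩ : ∃ K : ℝ, K = 2 * C * a * b := ⟨_, rfl⟩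
  have hK : 0 < K := by
    have hC : 0 < C := pos_of_mul_pos_left (one_pos.trans_le hCa) ha.le
    rw [hK_def]; positivity
  have hw₂ : 0 ≤ a * (C * b - 1) / K := by have := sub_nonneg.2 hCb; positivity
  have hw₃ : 0 ≤ b * (C * a - 1) / K := by have := sub_nonneg.2 hCa; positivity
  -- weights for which the geometric mean of `K (t²)^a (h²)^b`, `K t²`, `K h²` is `K t h`
  have hw : 1 / K + a * (C * b - 1) / K + b * (C * a - 1) / K = 1 := by
    field_simp; linear_combination -hK_def - hab
  have htw : a * (1 / K) + a * (C * b - 1) / K = 1 / 2 := by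
    field_simp; linear_combination -hK_def
  have hhw : b * (1 / K) + b * (C * a - 1) / K = 1 / 2 := by
    field_simp; linear_combination -hK_def
  have amgm := geom_mean_le_arith_mean3_weighted (one_div_pos.2 hK).le hw₂ hw₃
    (by positivity : 0 ≤ K * ((t ^ 2) ^ a * (h ^ 2) ^ b)) (by positivity : 0 ≤ K * t ^ 2)
    (by positivity : 0 ≤ K * h ^ 2) hw
  rw [mul_rpow_mul_rpow_eq_mul_sqrt_mul_sqrt hK (sq_nonneg t) (sq_nonneg h) hw htw hhw,
    sqrt_sq ht, sqrt_sq hh] at amgm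
  field_simp at amgm
  calc a * t ^ 2 + b * h ^ 2 - C * (a * b * (t - h) ^ 2)
      = K * (t * h) - a * (C * b - 1) * t ^ 2 - b * (C * a - 1) * h ^ 2 := by rw [hK_def]; ring
    _ ≤ (t ^ 2) ^ a * (h ^ 2) ^ b := by linarith

theorem mul_rpow_le_mul_rpow_of_le {x y b : ℝ} (hx : 0 ≤ x) (hxy : x ≤ y) (hb : b ≤ 1) :
    x * y ^ b ≤ y * x ^ b := by
  rcases hx.eq_or_lt with rfl | hx
  · simpa using mul_nonneg hxy (zero_rpow_nonneg b)
  have hy := hx.trans_le hxy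
  have := self_le_rpow_of_le_one (div_nonneg hx.le hy.le) ((div_le_one hy).2 hxy) hb
  rw [div_rpow hx.le hy.le, div_le_div_iff₀ hy (rpow_pos_of_pos hy b)] at this
  linarith

theorem merge_sub_mul_variance_le {a b C t h q σ : ℝ} (hab : a + b = 1) (ha : 0 < a)
    (hb : 0 < b) (hCa : 1 ≤ C * a) (hCb : 1 ≤ C * b) (ht : 0 ≤ t) (hh : 0 ≤ h) (hσ : 0 ≤ σ)
    (hq : h ^ 2 ≤ q) (hσq : q - C * b * (q - h ^ 2) ≤ σ) :
    a * t ^ 2 + b * q - C * (a * t ^ 2 + b * q - (a * t + b * h) ^ 2) ≤ (t ^ 2) ^ a * σ ^ b := by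
  have hB_le := two_point_sub_mul_variance_le hab ha hb hCa hCb ht hh
  have hC : 1 ≤ C := by nlinarith
  obtain rfl : a = 1 - b := by linarith
  set B := (1 - b) * t ^ 2 + b * h ^ 2 - C * ((1 - b) * b * (t - h) ^ 2)
  set P := (t ^ 2) ^ (1 - b)
  have hv : 0 ≤ (C - 1) * b * (q - h ^ 2) := by
    have := sub_nonneg.2 hq
    have := sub_nonneg.2 hC
    positivity
  rw [show (1 - b) * t ^ 2 + b * q - C * ((1 - b) * t ^ 2 + b * q - ((1 - b) * t + b * h) ^ 2)
      = B - (C - 1) * b * (q - h ^ 2) by ring]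
  rcases le_or_gt (h ^ 2) σ with hσh | hσh
  · calc B - (C - 1) * b * (q - h ^ 2) ≤ P * (h ^ 2) ^ b := by linarith
      _ ≤ P * σ ^ b := by gcongr
  rcases le_or_gt B 0 with hB | hB
  · have : 0 ≤ P * σ ^ b := by positivity
    linarith
  -- `B` is a concave quadratic in `t` with maximum `(C - 1) * b * h ^ 2 / (C * b - 1)`
  have hB_max : (C * b - 1) * B ≤ (C - 1) * b * h ^ 2 := by
    nlinarith [mul_nonneg ha.le (sq_nonneg ((C * b - 1) * t - C * b * h))]
  have hgap : h ^ 2 - σ ≤ (C * b - 1) * (q - h ^ 2) := by linarith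
  have hCb' : 0 < C * b - 1 := by nlinarith
  have hgap_B : (h ^ 2 - σ) * B ≤ (C - 1) * b * (q - h ^ 2) * h ^ 2 := by
    refine le_of_mul_le_mul_left ?_ hCb'
    calc (C * b - 1) * ((h ^ 2 - σ) * B) = (h ^ 2 - σ) * ((C * b - 1) * B) := by ring
      _ ≤ (h ^ 2 - σ) * ((C - 1) * b * h ^ 2) := by gcongr
      _ ≤ (C * b - 1) * (q - h ^ 2) * ((C - 1) * b * h ^ 2) := by gcongr
      _ = (C * b - 1) * ((C - 1) * b * (q - h ^ 2) * h ^ 2) := by ring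
  refine le_of_mul_le_mul_left ?_ (hσ.trans_lt hσh)
  calc h ^ 2 * (B - (C - 1) * b * (q - h ^ 2)) ≤ σ * B := by linarith
    _ ≤ σ * (P * (h ^ 2) ^ b) := by gcongr
    _ = P * (σ * (h ^ 2) ^ b) := by ring
    _ ≤ P * (h ^ 2 * σ ^ b) :=
        mul_le_mul_of_nonneg_left (mul_rpow_le_mul_rpow_of_le hσ hσh.le (by linarith))
          (by positivity)
    _ = h ^ 2 * (P * σ ^ b) := by ring

theorem Finset.sum_mul_sub_sum_mul_sq {ι R : Type*} [CommRing R] (s : Finset ι) (α t : ι → R)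
    (hα : ∑ i ∈ s, α i = 1) :
    ∑ i ∈ s, α i * (t i - ∑ k ∈ s, α k * t k) ^ 2 =
      ∑ i ∈ s, α i * t i ^ 2 - (∑ i ∈ s, α i * t i) ^ 2 := by
  set M := ∑ i ∈ s, α i * t i
  calc ∑ i ∈ s, α i * (t i - M) ^ 2 = ∑ i ∈ s, (α i * t i ^ 2 - 2 * M * (α i * t i) + M ^ 2 * α i) :=
        sum_congr rfl fun i _ => by ring
    _ = ∑ i ∈ s, α i * t i ^ 2 - M ^ 2 := by
        rw [sum_add_distrib, sum_sub_distrib, ← mul_sum, ← mul_sum, hα]; ring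

theorem Finset.mul_sum_div_mul {ι K : Type*} [Field K] (s : Finset ι) {A : K} (hA : A ≠ 0)
    (α f : ι → K) :
    A * ∑ i ∈ s, α i / A * f i = ∑ i ∈ s, α i * f i := by
  rw [mul_sum]
  exact sum_congr rfl fun i _ => by field_simp

theorem Finset.sum_mul_sq_sub_mul_variance_le_prod_rpow {ι : Type*} (s : Finset ι)
    {α t : ι → ℝ} {C : ℝ} (hα : ∀ i ∈ s, 0 < α i) (hα1 : ∑ i ∈ s, α i = 1)
    (hC : ∀ i ∈ s, 1 ≤ C * α i) (ht : ∀ i ∈ s, 0 ≤ t i) :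
    ∑ i ∈ s, α i * t i ^ 2 - C * ∑ i ∈ s, α i * (t i - ∑ k ∈ s, α k * t k) ^ 2 ≤
      ∏ i ∈ s, (t i ^ 2) ^ α i := by
  rw [s.sum_mul_sub_sum_mul_sq α t hα1]
  induction s using Finset.cons_induction generalizing α C with
  | empty => simp at hα1
  | cons j s hj ih =>
    simp only [forall_mem_cons] at hα hC ht
    rw [sum_cons] at hα1
    rcases s.eq_empty_or_nonempty with rfl | ⟨k, hk⟩
    · simp_all
    set A := ∑ i ∈ s, α i
    have hA : 0 < A := sum_pos (fun i hi => hα.2 i hi) ⟨k, hk⟩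
    have hCA : 1 ≤ C * A := by
      have : 0 ≤ C := by nlinarith [hα.1, hC.1]
      calc 1 ≤ C * α k := hC.2 k hk
        _ ≤ C * A := by gcongr; exact single_le_sum (fun i hi => (hα.2 i hi).le) hk
    have hβ1 : ∑ i ∈ s, α i / A = 1 := by rw [← sum_div, div_self hA.ne']
    have hIH := ih (α := fun i => α i / A) (C := C * A) (fun i hi => div_pos (hα.2 i hi) hA) hβ1
      (fun i hi => by rw [mul_assoc, mul_div_cancel₀ _ hA.ne']; exact hC.2 i hi) ht.2
    have hq := (s.sum_mul_sub_sum_mul_sq (fun i => α i / A) t hβ1) ▸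
      sum_nonneg fun i hi => mul_nonneg (div_pos (hα.2 i hi) hA).le (sq_nonneg _)
    have := merge_sub_mul_variance_le hα1 hα.1 hA hC.1 hCA ht.1
      (sum_nonneg fun i hi => mul_nonneg (div_pos (hα.2 i hi) hA).le (ht.2 i hi))
      (prod_nonneg fun i hi => rpow_nonneg (sq_nonneg _) _) (sub_nonneg.1 hq) hIH
    rw [mul_sum_div_mul s hA.ne', mul_sum_div_mul s hA.ne', ← finsetProd_rpow _ _
      (fun i _ => rpow_nonneg (sq_nonneg _) _)] at this
    simp only [← rpow_mul (sq_nonneg _), div_mul_cancel₀ _ hA.ne'] at this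
    simpa only [sum_cons, prod_cons] using this

theorem one_sub_mul_sum_integral_variance_le_integral_prod {ι Ω : Type*} [Fintype ι]
    [MeasurableSpace Ω] {μ : Measure Ω} {α : ι → ℝ} {C : ℝ} {g : ι → Ω → ℝ}
    (hα : ∀ i, 0 < α i) (hα1 : ∑ i, α i = 1) (hC : ∀ i, 1 ≤ C * α i)
    (hg0 : ∀ i u, 0 ≤ g i u) (hg : ∀ i, MemLp (g i) 2 μ) (hg1 : ∀ i, ∫ u, g i u ^ 2 ∂μ = 1) :
    1 - C * ∑ i, α i * ∫ u, (g i u - ∑ k, α k * g k u) ^ 2 ∂μ ≤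
      ∫ u, ∏ i, (g i u ^ 2) ^ α i ∂μ := by
  have hsq_int i : Integrable (fun u => g i u ^ 2) μ := (hg i).integrable_sq
  have hdev_int i : Integrable (fun u => (g i u - ∑ k, α k * g k u) ^ 2) μ :=
    ((hg i).sub (memLp_finsetSum _ fun k _ => (hg k).const_mul (α k))).integrable_sq
  have hmoment_int : Integrable (fun u => ∑ i, α i * g i u ^ 2) μ :=
    integrable_finsetSum _ fun i _ => (hsq_int i).const_mul _
  have hvar_int : Integrable (fun u => ∑ i, α i * (g i u - ∑ k, α k * g k u) ^ 2) μ :=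
    integrable_finsetSum _ fun i _ => (hdev_int i).const_mul _
  -- weighted AM-GM dominates the geometric mean by the integrable arithmetic mean
  have hprod_int : Integrable (fun u => ∏ i, (g i u ^ 2) ^ α i) μ := by
    refine hmoment_int.mono' (Finset.aestronglyMeasurable_fun_prod _ fun i _ => ?_)
      (ae_of_all _ fun u => ?_)
    · exact ((hg i).1.aemeasurable.pow_const 2).pow_const _ |>.aestronglyMeasurable
    · rw [norm_of_nonneg (prod_nonneg fun i _ => rpow_nonneg (sq_nonneg _) _)]
      exact geom_mean_le_arith_mean_weighted _ _ _ (fun i _ => (hα i).le) hα1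
        fun i _ => sq_nonneg _
  calc 1 - C * ∑ i, α i * ∫ u, (g i u - ∑ k, α k * g k u) ^ 2 ∂μ
      = ∫ u, (∑ i, α i * g i u ^ 2 - C * ∑ i, α i * (g i u - ∑ k, α k * g k u) ^ 2) ∂μ := by
        rw [integral_sub hmoment_int (hvar_int.const_mul C), integral_const_mul,
          integral_finsetSum _ fun i _ => (hsq_int i).const_mul _,
          integral_finsetSum _ fun i _ => (hdev_int i).const_mul _]
        simp only [integral_const_mul, hg1, mul_one, hα1]
    _ ≤ ∫ u, ∏ i, (g i u ^ 2) ^ α i ∂μ :=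
        integral_mono (hmoment_int.sub (hvar_int.const_mul C)) hprod_int fun u =>
          univ.sum_mul_sq_sub_mul_variance_le_prod_rpow (fun i _ => hα i) hα1 (fun i _ => hC i)
            fun i _ => hg0 i u

theorem rpow_half_div_sq {x c p : ℝ} (hx : 0 ≤ x) (hc : 0 ≤ c) :
    (x ^ (p / 2) / c ^ (p / 2)) ^ 2 = x ^ p / c ^ p := by
  rw [div_pow, ← rpow_mul_natCast hx, ← rpow_mul_natCast hc]
  norm_num

theorem rpow_half_div_sq_rpow_inv {x c p : ℝ} (hx : 0 ≤ x) (hc : 0 ≤ c) (hp : p ≠ 0) :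
    ((x ^ (p / 2) / c ^ (p / 2)) ^ 2) ^ p⁻¹ = x / c := by
  rw [rpow_half_div_sq hx hc, div_rpow (by positivity) (by positivity), rpow_rpow_inv hx hp,
    rpow_rpow_inv hc hp]

theorem memLp_two_rpow_half_div {Ω : Type*} [MeasurableSpace Ω] {μ : Measure Ω} {f : Ω → ℝ}
    {p : ℝ} (c : ℝ) (hf : Measurable f) (hf0 : ∀ u, 0 ≤ f u) (hc : 0 ≤ c)
    (hint : Integrable (fun u => f u ^ p) μ) :
    MemLp (fun u => f u ^ (p / 2) / c ^ (p / 2)) 2 μ := by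
  refine (memLp_two_iff_integrable_sq ((hf.pow_const _).div_const _).aestronglyMeasurable).2 ?_
  simp only [rpow_half_div_sq (hf0 _) hc]
  exact hint.div_const _

theorem integral_rpow_half_div_sq {Ω : Type*} [MeasurableSpace Ω] {μ : Measure Ω} {f : Ω → ℝ}
    {p N : ℝ} (hf0 : ∀ u, 0 ≤ f u) (hN0 : 0 < N) (hN : N ^ p = ∫ u, f u ^ p ∂μ) :
    ∫ u, (f u ^ (p / 2) / N ^ (p / 2)) ^ 2 ∂μ = 1 := by
  simp only [rpow_half_div_sq (hf0 _) hN0.le, integral_div, ← hN]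
  exact div_self (rpow_pos_of_pos hN0 p).ne'

open MeasureTheory in
theorem refined_holder_lower_general {Ω : Type*} [MeasurableSpace Ω] (μ : Measure Ω)
    (n : ℕ) (p : Fin n → ℝ) (hp : ∀ i, 1 < p i)
    (hps : ∑ i, 1 / p i = 1)
    (f : Fin n → Ω → ℝ) (hmeas : ∀ i, Measurable (f i))
    (hnonneg : ∀ i, ∀ u, 0 ≤ f i u)
    (hint : ∀ i, Integrable (fun u => f i u ^ p i) μ)
    (N : Fin n → ℝ) (hN : ∀ i, N i = (∫ u, f i u ^ p i ∂μ) ^ (1 / p i))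
    (hNpos : ∀ i, 0 < N i) :
    (∏ i, N i) *
        max 0 (1 - (⨆ i, p i) *
          ∑ i, (1 / p i) *
            ∫ u, (f i u ^ (p i / 2) / N i ^ (p i / 2) -
              ∑ k, (1 / p k) * (f k u ^ (p k / 2) / N k ^ (p k / 2))) ^ 2 ∂μ) ≤
      ∫ u, ∏ i, f i u ∂μ := by
  have hp0 i : 0 < p i := one_pos.trans (hp i)
  have hC i : 1 ≤ (⨆ k, p k) * (1 / p i) := by
    rw [mul_one_div, one_le_div (hp0 i)]
    exact le_ciSup (Set.finite_range p).bddAbove i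
  have hNp i : N i ^ p i = ∫ u, f i u ^ p i ∂μ := by
    rw [hN i, one_div, rpow_inv_rpow (integral_nonneg fun u => rpow_nonneg (hnonneg i u) _)
      (hp0 i).ne']
  have key := one_sub_mul_sum_integral_variance_le_integral_prod (μ := μ)
    (fun i => one_div_pos.2 (hp0 i)) hps hC
    (fun i u => div_nonneg (rpow_nonneg (hnonneg i u) _) (rpow_nonneg (hNpos i).le _))
    (fun i => memLp_two_rpow_half_div _ (hmeas i) (hnonneg i) (hNpos i).le (hint i))
    fun i => integral_rpow_half_div_sq (hnonneg i) (hNpos i) (hNp i)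
  have hPN : 0 < ∏ i, N i := prod_pos fun i _ => hNpos i
  simp only [one_div, rpow_half_div_sq_rpow_inv (hnonneg _ _) (hNpos _).le (hp0 _).ne',
    prod_div_distrib, integral_div] at key
  rw [← le_div_iff₀' hPN]
  exact max_le (div_nonneg (integral_nonneg fun u => prod_nonneg fun i _ => hnonneg i u) hPN.le)
    (by simpa only [one_div] using key)

open MeasureTheory in
theorem refined_holder_lower {Ω : Type*} [MeasurableSpace Ω] (μ : Measure Ω)
    (n : ℕ) (hn : 1 ≤ n) (p : Fin n → ℝ) (hp : ∀ i, 1 < p i)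
    (hps : ∑ i, 1 / p i = 1)
    (f : Fin n → Ω → ℝ) (hmeas : ∀ i, Measurable (f i))
    (hnonneg : ∀ i, ∀ u, 0 ≤ f i u)
    (hint : ∀ i, Integrable (fun u => f i u ^ p i) μ)
    (N : Fin n → ℝ) (hN : ∀ i, N i = (∫ u, f i u ^ p i ∂μ) ^ (1 / p i))
    (hNpos : ∀ i, 0 < N i) :
    (∏ i, N i) *
        max 0 (1 - (⨆ i, p i) *
          ∑ i, (1 / p i) *
            ∫ u, (f i u ^ (p i / 2) / N i ^ (p i / 2) -
              ∑ k, (1 / p k) * (f k u ^ (p k / 2) / N k ^ (p k / 2))) ^ 2 ∂μ) ≤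
      ∫ u, ∏ i, f i u ∂μ :=
  refined_holder_lower_general μ n p hp hps f hmeas hnonneg hint N hN hNpos
end
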